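/- arXiv:1012.2395 — 4 statements merged into one kernel-verified Lean document; each statement's English description precedes it below -/
import Mathlib

section
/- For the fully discrete scheme, for every Lipschitz continuous φ : ℝ^d → ℝ with Lipschitz constant Lip(φ) and every n = 0,…,N_k−1: |∫φ dλ_{n+1}^k − ∫ φ ∘ γ̂_n^k dλ_n^k| ≤ 2 Lip(φ) √d h_k. -/
open MeasureTheory Metric Filter

noncomputable section

abbrev Euc (d : ℕ) := EuclideanSpace ℝ (Fin d)

/-- `P1 μ`: μ is a Borel probability measure with finite first moment. -/
def P1 {d : ℕ} (μ : Measure (Euc d)) : Prop :=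
  IsProbabilityMeasure μ ∧ Integrable (fun x => ‖x‖) μ

/-- `P2 μ`: μ is a Borel probability measure with finite second moment. -/
def P2 {d : ℕ} (μ : Measure (Euc d)) : Prop :=
  IsProbabilityMeasure μ ∧ Integrable (fun x => ‖x‖ ^ 2) μ

/-- The Wasserstein distance `W₁(μ,ν) = sup {∫ φ dν − ∫ φ dμ : φ 1-Lipschitz}`. -/
def W1 {d : ℕ} (μ ν : Measure (Euc d)) : ℝ :=
  ⨆ φ : {φ : Euc d → ℝ // LipschitzWith 1 φ}, (∫ x, φ.1 x ∂ν - ∫ x, φ.1 x ∂μ)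

/-- Assumption A on the velocity field. -/
def AssumptionA {d : ℕ} (v : Measure (Euc d) → Euc d → Euc d) (V L : ℝ) : Prop :=
  0 < V ∧ 0 < L ∧
  (∀ μ, P1 μ → ∀ x, ‖v μ x‖ ≤ V) ∧
  (∀ μ ν, P1 μ → P1 ν → ∀ x y, ‖v ν y - v μ x‖ ≤ L * (‖y - x‖ + W1 μ ν)) ∧
  (∀ μ ν, P1 μ → P1 ν → ∀ α : ℝ, 0 ≤ α → α ≤ 1 → ∀ x,
    v (ENNReal.ofReal α • μ + ENNReal.ofReal (1 - α) • ν) x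
      = α • v μ x + (1 - α) • v ν x)

/-- Continuity of a curve of measures with respect to the `W₁` metric, on `[0,T]`. -/
def W1ContinuousOn {d : ℕ} (μ : ℝ → Measure (Euc d)) (T : ℝ) : Prop :=
  ∀ t ∈ Set.Icc (0:ℝ) T, ∀ ε > 0, ∃ δ > 0,
    ∀ s ∈ Set.Icc (0:ℝ) T, |s - t| < δ → W1 (μ s) (μ t) < ε

/-- Weak solution of the Cauchy problem ∂ₜμ + ∇·(μ v[μ]) = 0, μ₀ = μ̄, on [0,T]. -/
def IsWeakSolution {d : ℕ} (v : Measure (Euc d) → Euc d → Euc d) (T : ℝ)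
    (μbar : Measure (Euc d)) (μ : ℝ → Measure (Euc d)) : Prop :=
  (∀ t ∈ Set.Icc (0:ℝ) T, P1 (μ t)) ∧ W1ContinuousOn μ T ∧
  ∀ φ : Euc d → ℝ, ContDiff ℝ (⊤ : ℕ∞) φ → HasCompactSupport φ →
    ∀ t ∈ Set.Icc (0:ℝ) T,
      ∫ x, φ x ∂(μ t) = (∫ x, φ x ∂μbar) +
        ∫ τ in (0:ℝ)..t, ∫ x, (inner ℝ (v (μ τ) x) (gradient φ x) : ℝ) ∂(μ τ)

/-- One step of the semi-discrete scheme: push forward by the one-step flow map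
`γ(x) = x + v[μ](x) Δt`. -/
def flowStep {d : ℕ} (v : Measure (Euc d) → Euc d → Euc d) (Δt : ℝ)
    (μ : Measure (Euc d)) : Measure (Euc d) :=
  μ.map (fun x => x + Δt • v μ x)

/-- The semi-discrete scheme `μ₀ = μ̄`, `μ_{n+1} = γ_n # μ_n`. -/
def sdScheme {d : ℕ} (v : Measure (Euc d) → Euc d → Euc d) (μbar : Measure (Euc d))
    (Δt : ℝ) : ℕ → Measure (Euc d)
  | 0 => μbar
  | n + 1 => flowStep v Δt (sdScheme v μbar Δt n)

/-- Linear-in-time interpolation of a sequence of measures with time step `Δt`. -/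
def interp {d : ℕ} (μseq : ℕ → Measure (Euc d)) (Δt : ℝ) (t : ℝ) : Measure (Euc d) :=
  ENNReal.ofReal (1 - (t - ⌊t / Δt⌋₊ * Δt) / Δt) • μseq ⌊t / Δt⌋₊ +
    ENNReal.ofReal ((t - ⌊t / Δt⌋₊ * Δt) / Δt) • μseq (⌊t / Δt⌋₊ + 1)

/-- Index of the grid cell containing `x`: `x_l ∈ [(i_l − 1/2)h, (i_l + 1/2)h)`. -/
def cellIdx {d : ℕ} (h : ℝ) (x : Euc d) : Fin d → ℤ := fun l => ⌊x l / h + 1 / 2⌋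

/-- Center `x_i = i h` of the grid cell with index `i`. -/
def cellCenter {d : ℕ} (h : ℝ) (i : Fin d → ℤ) : Euc d :=
  (EuclideanSpace.equiv (Fin d) ℝ).symm (fun l => (i l : ℝ) * h)

/-- The grid cell `E_i = ∏_l [(i_l − 1/2)h, (i_l + 1/2)h)`. -/
def cell {d : ℕ} (h : ℝ) (i : Fin d → ℤ) : Set (Euc d) := {x | cellIdx h x = i}

/-- Piecewise-constant (cellwise) discretization of a measure: the absolutely continuous
measure with density `μ(E_i)/h^d` on the cell `E_i`. -/
def discretize {d : ℕ} (h : ℝ) (μ : Measure (Euc d)) : Measure (Euc d) :=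
  volume.withDensity (fun x => μ (cell h (cellIdx h x)) / ENNReal.ofReal (h ^ d))

/-- The piecewise-constant approximate velocity `v̂[μ](x) = v[μ](x_i)` for `x ∈ E_i`. -/
def vhat {d : ℕ} (v : Measure (Euc d) → Euc d → Euc d) (h : ℝ)
    (μ : Measure (Euc d)) : Euc d → Euc d :=
  fun x => v μ (cellCenter h (cellIdx h x))

/-- The fully discrete scheme: `λ₀ = discretization of μ̄`,
`λ_{n+1} = discretization of γ̂_n # λ_n` with `γ̂_n(x) = x + v̂[λ_n](x) Δt`. -/
def fdScheme {d : ℕ} (v : Measure (Euc d) → Euc d → Euc d) (μbar : Measure (Euc d))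
    (h Δt : ℝ) : ℕ → Measure (Euc d)
  | 0 => discretize h μbar
  | n + 1 =>
      discretize h ((fdScheme v μbar h Δt n).map
        (fun x => x + Δt • vhat v h (fdScheme v μbar h Δt n) x))

/-- Uniform-in-time convergence on `[0,T]` with respect to `W₁`. -/
def UnifW1Tendsto {d : ℕ} (Λ : ℕ → ℝ → Measure (Euc d)) (μ : ℝ → Measure (Euc d))
    (T : ℝ) : Prop :=
  ∀ ε > 0, ∃ K : ℕ, ∀ k ≥ K, ∀ t ∈ Set.Icc (0:ℝ) T, W1 (Λ k t) (μ t) < ε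


variable {d : ℕ}

lemma measurableSet_cell (h : ℝ) (i : Fin d → ℤ) : MeasurableSet (cell h i) := by
  have : cell h i = ⋂ l, (fun x : Euc d => ⌊x l / h + 1/2⌋) ⁻¹' {i l} := by
    ext x; simp [cell, cellIdx, funext_iff]
  rw [this]
  exact MeasurableSet.iInter fun l =>
    (((measurable_pi_apply l).comp (MeasurableEquiv.toLp 2 (Fin d → ℝ)).symm.measurable).div_const h
      |>.add_const _).floor (measurableSet_singleton _)

lemma mem_cell_self (h : ℝ) (x : Euc d) : x ∈ cell h (cellIdx h x) := rfl

lemma iUnion_cell (h : ℝ) : (⋃ i : Fin d → ℤ, cell h i) = Set.univ :=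
  Set.eq_univ_of_forall fun x => Set.mem_iUnion.2 ⟨cellIdx h x, mem_cell_self h x⟩

lemma cell_disjoint (h : ℝ) : Pairwise (Function.onFun Disjoint (cell (d := d) h)) := by
  intro i j hij
  refine Set.disjoint_left.2 fun x hx hx' => hij ?_
  rw [← hx, ← hx']

/-- Preimage under a cellwise-constant map is a union of cells. -/
lemma preimage_comp_cellIdx {β : Type*} (h : ℝ) (f : (Fin d → ℤ) → β) (s : Set β) :
    (fun x : Euc d => f (cellIdx h x)) ⁻¹' s = ⋃ i ∈ {i : (Fin d → ℤ) | f i ∈ s}, cell h i := by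
  ext x
  simp only [Set.mem_preimage, Set.mem_iUnion, Set.mem_setOf_eq]
  constructor
  · exact fun hx => ⟨cellIdx h x, hx, mem_cell_self h x⟩
  · rintro ⟨i, hi, hx⟩; rwa [show cellIdx h x = i from hx]

lemma measurable_comp_cellIdx {β : Type*} [MeasurableSpace β] (h : ℝ) (f : (Fin d → ℤ) → β) :
    Measurable (fun x : Euc d => f (cellIdx h x)) := by
  intro s _
  rw [preimage_comp_cellIdx]
  exact MeasurableSet.biUnion (Set.to_countable _) fun i _ => measurableSet_cell h i

/-- Box description of a cell. -/
lemma cell_eq_pi {h : ℝ} (hh : 0 < h) (i : Fin d → ℤ) :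
    cell h i = (MeasurableEquiv.toLp 2 (Fin d → ℝ)).symm ⁻¹'
      (Set.univ.pi fun l => Set.Ico (((i l : ℝ) - 1/2) * h) (((i l : ℝ) + 1/2) * h)) := by
  have key : ∀ (a : ℝ) (m : ℤ), ⌊a / h + 1/2⌋ = m ↔
      ((m:ℝ) - 1/2)*h ≤ a ∧ a < ((m:ℝ)+1/2)*h := by
    intro a m
    rw [Int.floor_eq_iff]
    constructor
    · rintro ⟨h1, h2⟩
      have h2' : a / h < (m:ℝ) + 1/2 := by push_cast at h2; linarith
      exact ⟨(le_div_iff₀ hh).1 (by linarith), (div_lt_iff₀ hh).1 h2'⟩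
    · rintro ⟨h1, h2⟩
      have h1' : (m:ℝ) - 1/2 ≤ a / h := (le_div_iff₀ hh).2 h1
      have h2' : a / h < (m:ℝ) + 1/2 := (div_lt_iff₀ hh).2 h2
      refine ⟨by linarith, by push_cast; linarith⟩
  ext x
  simp only [cell, cellIdx, Set.mem_setOf_eq, Set.mem_preimage, Set.mem_pi, Set.mem_univ,
    Set.mem_Ico, forall_true_left, funext_iff]
  exact forall_congr' fun l => key (x l) (i l)

lemma volume_cell {h : ℝ} (hh : 0 < h) (i : Fin d → ℤ) :
    volume (cell h i) = ENNReal.ofReal (h ^ d) := by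
  rw [cell_eq_pi hh i,
    (EuclideanSpace.volume_preserving_symm_measurableEquiv_toLp (Fin d)).measure_preimage
      ((MeasurableSet.univ_pi fun l => measurableSet_Ico).nullMeasurableSet),
    volume_pi_pi]
  have : ∀ l : Fin d, volume (Set.Ico (((i l : ℝ) - 1/2) * h) (((i l : ℝ) + 1/2) * h))
      = ENNReal.ofReal h := by
    intro l
    rw [Real.volume_Ico, show ((i l:ℝ)+1/2)*h - ((i l:ℝ)-1/2)*h = h by ring]
  rw [Finset.prod_congr rfl fun l _ => this l, Finset.prod_const, Finset.card_univ,
    Fintype.card_fin, ← ENNReal.ofReal_pow hh.le]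

lemma discretize_cell {h : ℝ} (hh : 0 < h) (μ : Measure (Euc d)) (i : Fin d → ℤ) :
    discretize h μ (cell h i) = μ (cell h i) := by
  have hpos : ENNReal.ofReal (h ^ d) ≠ 0 := by
    simp [ENNReal.ofReal_eq_zero, not_le, pow_pos hh]
  rw [discretize, withDensity_apply _ (measurableSet_cell h i)]
  have : ∀ x ∈ cell h i, μ (cell h (cellIdx h x)) / ENNReal.ofReal (h ^ d)
      = μ (cell h i) / ENNReal.ofReal (h ^ d) := by
    intro x hx; rw [show cellIdx h x = i from hx]
  rw [setLIntegral_congr_fun (measurableSet_cell h i) this,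
    setLIntegral_const, volume_cell hh i,
    ENNReal.div_mul_cancel hpos ENNReal.ofReal_ne_top]

lemma measure_eq_of_cell {h : ℝ} (μ ν : Measure (Euc d))
    (hc : ∀ i, μ (cell h i) = ν (cell h i)) (s : Set (Euc d))
    (hs : ∃ S : Set (Fin d → ℤ), s = ⋃ i ∈ S, cell h i) : μ s = ν s := by
  obtain ⟨S, rfl⟩ := hs
  rw [measure_biUnion (Set.to_countable S) (fun i _ j _ hij => cell_disjoint h hij)
    (fun i _ => measurableSet_cell h i),
    measure_biUnion (Set.to_countable S) (fun i _ j _ hij => cell_disjoint h hij)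
    (fun i _ => measurableSet_cell h i)]
  exact tsum_congr fun i => by rw [hc i]

lemma measure_univ_eq_of_cell {h : ℝ} (μ ν : Measure (Euc d))
    (hc : ∀ i, μ (cell h i) = ν (cell h i)) : μ Set.univ = ν Set.univ := by
  refine measure_eq_of_cell μ ν hc _ ⟨Set.univ, ?_⟩
  simp [iUnion_cell h]

lemma map_center_eq {h : ℝ} (μ ν : Measure (Euc d))
    (hc : ∀ i, μ (cell h i) = ν (cell h i)) :
    μ.map (fun x => cellCenter h (cellIdx h x)) = ν.map (fun x => cellCenter h (cellIdx h x)) := by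
  ext s hs
  rw [Measure.map_apply (measurable_comp_cellIdx h _) hs,
    Measure.map_apply (measurable_comp_cellIdx h _) hs]
  exact measure_eq_of_cell μ ν hc _ ⟨_, preimage_comp_cellIdx h _ s⟩

lemma dist_cellCenter {h : ℝ} (hh : 0 < h) (x : Euc d) :
    ‖x - cellCenter h (cellIdx h x)‖ ≤ Real.sqrt d * h / 2 := by
  have hcoord : ∀ l, |x l - (cellIdx h x l : ℝ) * h| ≤ h / 2 := by
    intro l
    set a := x l / h with ha
    have h1 : ((⌊a + 1/2⌋ : ℤ) : ℝ) ≤ a + 1/2 := Int.floor_le _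
    have h2 : a + 1/2 < (⌊a + 1/2⌋ : ℤ) + 1 := Int.lt_floor_add_one _
    have key : |a - ((⌊a + 1/2⌋ : ℤ) : ℝ)| ≤ 1/2 := by
      rw [abs_le]; constructor <;> linarith
    have hxl : x l = a * h := (div_mul_cancel₀ _ hh.ne').symm
    have hidx : (cellIdx h x l : ℝ) = ((⌊a + 1/2⌋ : ℤ) : ℝ) := rfl
    calc |x l - (cellIdx h x l : ℝ) * h| = |a - ((⌊a + 1/2⌋ : ℤ) : ℝ)| * h := by
          rw [hidx, hxl, ← sub_mul, abs_mul, abs_of_pos hh]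
      _ ≤ 1/2 * h := mul_le_mul_of_nonneg_right key hh.le
      _ = h / 2 := by ring
  rw [EuclideanSpace.norm_eq]
  have hterm : ∀ l, ‖(x - cellCenter h (cellIdx h x)) l‖ ^ 2 ≤ (h/2)^2 := by
    intro l
    have he : (x - cellCenter h (cellIdx h x)) l = x l - (cellIdx h x l : ℝ) * h := rfl
    rw [he, Real.norm_eq_abs]
    exact pow_le_pow_left₀ (abs_nonneg _) (hcoord l) 2
  have hsum : ∑ l, ‖(x - cellCenter h (cellIdx h x)) l‖ ^ 2 ≤ (d : ℝ) * (h/2)^2 := by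
    calc ∑ l, ‖(x - cellCenter h (cellIdx h x)) l‖ ^ 2 ≤ ∑ _l : Fin d, (h/2)^2 :=
          Finset.sum_le_sum fun l _ => hterm l
      _ = (d : ℝ) * (h/2)^2 := by
          rw [Finset.sum_const, Finset.card_univ, Fintype.card_fin, nsmul_eq_mul]
  calc Real.sqrt (∑ l, ‖(x - cellCenter h (cellIdx h x)) l‖ ^ 2)
      ≤ Real.sqrt ((d : ℝ) * (h/2)^2) := Real.sqrt_le_sqrt hsum
    _ = Real.sqrt d * (h/2) := by
        rw [Real.sqrt_mul (Nat.cast_nonneg d), Real.sqrt_sq (by positivity)]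
    _ = Real.sqrt d * h / 2 := by ring

lemma integral_discr_estimate {h : ℝ} (hh : 0 < h) (μ ν : Measure (Euc d))
    [IsProbabilityMeasure μ] [IsProbabilityMeasure ν]
    (hc : ∀ i, μ (cell h i) = ν (cell h i))
    (φ : Euc d → ℝ) (K : NNReal) (hφ : LipschitzWith K φ) :
    |(∫ x, φ x ∂μ) - ∫ x, φ x ∂ν| ≤ 2 * K * Real.sqrt d * h := by
  set c : Euc d → Euc d := fun x => cellCenter h (cellIdx h x) with hcdef
  set ψ : Euc d → ℝ := fun x => φ (c x) with hψdef
  set b : ℝ := K * (Real.sqrt d * h / 2) with hbdef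
  have hcm : Measurable c := measurable_comp_cellIdx h _
  have hφm : Measurable φ := hφ.continuous.measurable
  have hψm : Measurable ψ := hφm.comp hcm
  have hbnd : ∀ x, ‖φ x - ψ x‖ ≤ b := by
    intro x
    have h1 : dist (φ x) (φ (c x)) ≤ K * dist x (c x) := hφ.dist_le_mul x (c x)
    have h2 : dist x (c x) ≤ Real.sqrt d * h / 2 := by
      rw [dist_eq_norm]; exact dist_cellCenter hh x
    calc ‖φ x - ψ x‖ = dist (φ x) (φ (c x)) := by rw [Real.dist_eq]; rfl
      _ ≤ K * dist x (c x) := h1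
      _ ≤ b := by rw [hbdef]; exact mul_le_mul_of_nonneg_left h2 K.2
  have hdiff : ∀ (ρ : Measure (Euc d)), IsProbabilityMeasure ρ →
      Integrable (fun x => φ x - ψ x) ρ := fun ρ _ =>
    (integrable_const b).mono' ((hφm.sub hψm).aestronglyMeasurable) (ae_of_all _ hbnd)
  have hmap : μ.map c = ν.map c := map_center_eq μ ν hc
  have hψeqμ : ∫ x, φ x ∂(μ.map c) = ∫ x, ψ x ∂μ :=
    integral_map hcm.aemeasurable hφ.continuous.aestronglyMeasurable
  have hψeqν : ∫ x, φ x ∂(ν.map c) = ∫ x, ψ x ∂ν :=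
    integral_map hcm.aemeasurable hφ.continuous.aestronglyMeasurable
  have hψint_eq : ∫ x, ψ x ∂μ = ∫ x, ψ x ∂ν := by rw [← hψeqμ, ← hψeqν, hmap]
  have hiffμ : Integrable φ (μ.map c) ↔ Integrable ψ μ :=
    integrable_map_measure hφ.continuous.aestronglyMeasurable hcm.aemeasurable
  have hiffν : Integrable φ (ν.map c) ↔ Integrable ψ ν :=
    integrable_map_measure hφ.continuous.aestronglyMeasurable hcm.aemeasurable
  have hψiff : Integrable ψ μ ↔ Integrable ψ ν := by rw [← hiffμ, ← hiffν, hmap]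
  have hintbound : ∀ (ρ : Measure (Euc d)), IsProbabilityMeasure ρ →
      |∫ x, (φ x - ψ x) ∂ρ| ≤ b := by
    intro ρ hρ
    have := norm_integral_le_of_norm_le_const (C := b) (μ := ρ)
      (f := fun x => φ x - ψ x) (ae_of_all _ hbnd)
    simpa using this
  have hb2 : 2 * b ≤ 2 * K * Real.sqrt d * h := by
    have : 2 * b = K * Real.sqrt d * h := by rw [hbdef]; ring
    rw [this]
    have hnn : (0:ℝ) ≤ K * Real.sqrt d * h := by positivity
    linarith
  by_cases hint : Integrable φ μ
  · have hψμ : Integrable ψ μ :=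
      (hint.sub (hdiff μ inferInstance)).congr (ae_of_all _ fun x => by simp)
    have hψν : Integrable ψ ν := hψiff.1 hψμ
    have hφν : Integrable φ ν :=
      (hψν.add (hdiff ν inferInstance)).congr (ae_of_all _ fun x => by simp)
    have e1 : (∫ x, φ x ∂μ) - ∫ x, φ x ∂ν
        = (∫ x, (φ x - ψ x) ∂μ) - ∫ x, (φ x - ψ x) ∂ν := by
      rw [integral_sub hint hψμ, integral_sub hφν hψν, hψint_eq]; ring
    rw [e1]
    calc |(∫ x, (φ x - ψ x) ∂μ) - ∫ x, (φ x - ψ x) ∂ν|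
        ≤ |∫ x, (φ x - ψ x) ∂μ| + |∫ x, (φ x - ψ x) ∂ν| := abs_sub _ _
      _ ≤ b + b := add_le_add (hintbound μ inferInstance) (hintbound ν inferInstance)
      _ = 2 * b := by ring
      _ ≤ _ := hb2
  · have hψμ : ¬ Integrable ψ μ := fun hψ => hint ((hψ.add (hdiff μ inferInstance)).congr (ae_of_all _ fun x => by simp))
    have hφν : ¬ Integrable φ ν := fun hφν =>
      hψμ (hψiff.2 ((hφν.sub (hdiff ν inferInstance)).congr (ae_of_all _ fun x => by simp)))
    rw [integral_undef hint, integral_undef hφν]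
    simp only [sub_zero, abs_zero]
    positivity

lemma isProb_discretize {h : ℝ} (hh : 0 < h) (μ : Measure (Euc d))
    [IsProbabilityMeasure μ] : IsProbabilityMeasure (discretize h μ) :=
  ⟨by rw [measure_univ_eq_of_cell (discretize h μ) μ (discretize_cell hh μ), measure_univ]⟩

lemma measurable_flowmap (v : Measure (Euc d) → Euc d → Euc d) (h Δt : ℝ)
    (μ : Measure (Euc d)) :
    Measurable (fun x : Euc d => x + Δt • vhat v h μ x) :=
  measurable_id.add (measurable_comp_cellIdx h fun i => Δt • v μ (cellCenter h i))

lemma isProb_fdScheme (v : Measure (Euc d) → Euc d → Euc d)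
    (μbar : Measure (Euc d)) [IsProbabilityMeasure μbar] {h : ℝ} (hh : 0 < h) (Δt : ℝ) :
    ∀ n, IsProbabilityMeasure (fdScheme v μbar h Δt n)
  | 0 => isProb_discretize hh μbar
  | (n+1) => by
      haveI := isProb_fdScheme v μbar hh Δt n
      haveI : IsProbabilityMeasure ((fdScheme v μbar h Δt n).map
          (fun x => x + Δt • vhat v h (fdScheme v μbar h Δt n) x)) :=
        Measure.isProbabilityMeasure_map (measurable_flowmap v h Δt _).aemeasurable
      exact isProb_discretize hh _

/-- Lemma 6 of the paper.
For the fully discrete scheme, for every Lipschitz continuous `φ : ℝ^d → ℝ` with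
Lipschitz constant `K` and every `n = 0,…,N_k−1`:
`|∫φ dλ_{n+1}^k − ∫ φ ∘ γ̂_n^k dλ_n^k| ≤ 2 K √d h_k`. -/
theorem fdScheme_approximate_pushforward
    (d : ℕ) (hd : 1 ≤ d)
    (v : Measure (Euc d) → Euc d → Euc d) (V : ℝ) (hV : 0 < V)
    (hbound : ∀ μ, P1 μ → ∀ x, ‖v μ x‖ ≤ V)
    (T : ℝ) (hT : 0 < T)
    (μbar : Measure (Euc d)) (hμbar : IsProbabilityMeasure μbar)
    (Δt h : ℕ → ℝ) (N : ℕ → ℕ)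
    (hΔtpos : ∀ k, 0 < Δt k) (hhpos : ∀ k, 0 < h k)
    (hNT : ∀ k, (N k : ℝ) * Δt k = T)
    (φ : Euc d → ℝ) (K : NNReal) (hφ : LipschitzWith K φ)
    (k n : ℕ) (hn : n < N k) :
    |(∫ x, φ x ∂(fdScheme v μbar (h k) (Δt k) (n + 1))) -
      ∫ x, φ (x + Δt k • vhat v (h k) (fdScheme v μbar (h k) (Δt k) n) x)
        ∂(fdScheme v μbar (h k) (Δt k) n)| ≤
      2 * K * Real.sqrt d * h k := by
  have hh := hhpos k
  set μn := fdScheme v μbar (h k) (Δt k) n with hμn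
  set γ : Euc d → Euc d := fun x => x + Δt k • vhat v (h k) μn x with hγdef
  have hγ : Measurable γ := measurable_flowmap v (h k) (Δt k) μn
  haveI : IsProbabilityMeasure μn := isProb_fdScheme v μbar hh (Δt k) n
  set ν : Measure (Euc d) := μn.map γ with hν
  haveI : IsProbabilityMeasure ν := Measure.isProbabilityMeasure_map hγ.aemeasurable
  haveI : IsProbabilityMeasure (discretize (h k) ν) := isProb_discretize hh ν
  have hstep : fdScheme v μbar (h k) (Δt k) (n + 1) = discretize (h k) ν := rfl
  have hpush : ∫ x, φ (γ x) ∂μn = ∫ x, φ x ∂ν :=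
    (integral_map hγ.aemeasurable hφ.continuous.aestronglyMeasurable).symm
  rw [hstep]
  have h2 : (∫ x, φ (x + Δt k • vhat v (h k) μn x) ∂μn) = ∫ x, φ x ∂ν := hpush
  rw [h2]
  exact integral_discr_estimate hh (discretize (h k) ν) ν (discretize_cell hh ν) φ K hφ


end
end

section
/- For the fully discrete scheme with h_k = β_kΔt_k (β_k > 0, β_k → 0), every λ_n^k belongs to P₁(ℝ^d) and the first moments are uniformly bounded: ∫|x| dλ_n^k(x) ≤ ∫|x| dμ̄(x) + (V + 2√d β_k) t_n^k + √d h_k for all n = 0,…,N_k and all k ≥ 0, where t_n^k = nΔt_k; in particular sup_{k≥0} sup_{0≤n≤N_k} ∫|x| dλ_n^k < +∞. -/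
open MeasureTheory Metric Filter

noncomputable section

namespace FD

variable {d : ℕ}

lemma cellIdx_eq_iff {h : ℝ} (hh : 0 < h) (x : Euc d) (i : Fin d → ℤ) :
    cellIdx h x = i ↔ ∀ l, ((i l : ℝ) - 1/2) * h ≤ x l ∧ x l < ((i l : ℝ) + 1/2) * h := by
  rw [funext_iff]
  refine forall_congr' fun l => ?_
  show ⌊x l / h + 1 / 2⌋ = i l ↔ _
  rw [Int.floor_eq_iff]
  constructor
  · rintro ⟨h1, h2⟩
    constructor
    · rw [← le_div_iff₀ hh]; linarith
    · rw [← div_lt_iff₀ hh]; push_cast at h2 ⊢; linarith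
  · rintro ⟨h1, h2⟩
    rw [← le_div_iff₀ hh] at h1
    rw [← div_lt_iff₀ hh] at h2
    constructor
    · linarith
    · push_cast at h2 ⊢; linarith


lemma cell_preimage {h : ℝ} (hh : 0 < h) (i : Fin d → ℤ) :
    cell h i = (MeasurableEquiv.toLp 2 (Fin d → ℝ)).symm ⁻¹'
      (Set.univ.pi fun l => Set.Ico (((i l : ℝ) - 1/2) * h) (((i l : ℝ) + 1/2) * h)) := by
  ext x
  simp only [cell, Set.mem_setOf_eq, cellIdx_eq_iff hh, Set.mem_preimage, Set.mem_pi,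
    Set.mem_univ, forall_true_left, Set.mem_Ico]
  rfl

lemma measurableSet_pi_Ico {h : ℝ} (i : Fin d → ℤ) :
    MeasurableSet (Set.univ.pi fun l : Fin d =>
      Set.Ico (((i l : ℝ) - 1/2) * h) (((i l : ℝ) + 1/2) * h)) :=
  MeasurableSet.univ_pi fun _ => measurableSet_Ico

lemma measurableSet_cell {h : ℝ} (hh : 0 < h) (i : Fin d → ℤ) :
    MeasurableSet (cell h i) := by
  rw [cell_preimage hh]
  exact (MeasurableEquiv.toLp 2 (Fin d → ℝ)).symm.measurable (measurableSet_pi_Ico i)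

lemma volume_cell {h : ℝ} (hh : 0 < h) (i : Fin d → ℤ) :
    volume (cell h i) = ENNReal.ofReal (h ^ d) := by
  rw [cell_preimage hh,
    (EuclideanSpace.volume_preserving_symm_measurableEquiv_toLp (Fin d)).measure_preimage
      (measurableSet_pi_Ico i).nullMeasurableSet,
    volume_pi_pi]
  simp only [Real.volume_Ico]
  have : ∀ l : Fin d, (((i l : ℝ) + 1/2) * h - ((i l : ℝ) - 1/2) * h) = h := by
    intro l; ring
  simp only [this]
  rw [Finset.prod_const, ← ENNReal.ofReal_pow hh.le]
  simp

lemma measurable_cellIdx {h : ℝ} : Measurable (cellIdx (d := d) h) := by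
  apply measurable_pi_lambda
  intro l
  exact Int.measurable_floor.comp ((measurable_pi_apply l).comp
    (MeasurableEquiv.toLp 2 (Fin d → ℝ)).symm.measurable |>.div_const h |>.add_const _)

lemma measurable_comp_cellIdx {h : ℝ} {α : Type*} [MeasurableSpace α]
    (f : (Fin d → ℤ) → α) : Measurable (fun x : Euc d => f (cellIdx h x)) :=
  (measurable_of_countable f).comp measurable_cellIdx

lemma iUnion_cell (h : ℝ) : (⋃ i, cell (d := d) h i) = Set.univ := by
  ext x; simp only [Set.mem_iUnion, Set.mem_univ, iff_true]
  exact ⟨cellIdx h x, rfl⟩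

lemma pairwise_disjoint_cell (h : ℝ) :
    Pairwise (Function.onFun Disjoint (cell (d := d) h)) := by
  intro i j hij
  rw [Function.onFun, Set.disjoint_left]
  rintro x (hx : cellIdx h x = i) (hx' : cellIdx h x = j)
  exact hij (hx ▸ hx')


open ENNReal

lemma lintegral_eq_tsum_cell {h : ℝ} (hh : 0 < h) (ν : Measure (Euc d)) (f : Euc d → ℝ≥0∞) :
    ∫⁻ x, f x ∂ν = ∑' i : Fin d → ℤ, ∫⁻ x in cell h i, f x ∂ν := by
  rw [← setLIntegral_univ, ← iUnion_cell h,
    lintegral_iUnion (fun i => measurableSet_cell hh i) (pairwise_disjoint_cell h)]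

lemma dens_measurable {h : ℝ} (μ : Measure (Euc d)) :
    Measurable (fun x : Euc d => μ (cell h (cellIdx h x)) / ENNReal.ofReal (h ^ d)) :=
  measurable_comp_cellIdx (fun i => μ (cell h i) / ENNReal.ofReal (h ^ d))

lemma lintegral_discretize {h : ℝ} (hh : 0 < h) (μ : Measure (Euc d))
    {f : Euc d → ℝ≥0∞} (hf : Measurable f) :
    ∫⁻ x, f x ∂(discretize h μ) =
      ∑' i : Fin d → ℤ, (μ (cell h i) / ENNReal.ofReal (h ^ d)) *
        ∫⁻ x in cell h i, f x := by
  rw [discretize, lintegral_withDensity_eq_lintegral_mul _ (dens_measurable μ) hf,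
    lintegral_eq_tsum_cell hh]
  congr 1
  ext i
  rw [← lintegral_const_mul _ hf]
  refine setLIntegral_congr_fun (measurableSet_cell hh i) ?_
  rintro x (hx : cellIdx h x = i)
  simp [hx]

lemma discretize_univ {h : ℝ} (hh : 0 < h) (μ : Measure (Euc d)) :
    discretize h μ Set.univ = μ Set.univ := by
  have hH0 : ENNReal.ofReal (h ^ d) ≠ 0 := by
    simp [ENNReal.ofReal_eq_zero, not_le, pow_pos hh]
  have hHt : ENNReal.ofReal (h ^ d) ≠ ∞ := ENNReal.ofReal_ne_top
  have : discretize h μ Set.univ = ∫⁻ x, (1 : ℝ≥0∞) ∂(discretize h μ) := by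
    simp
  rw [this, lintegral_discretize hh μ measurable_const]
  have : ∀ i : Fin d → ℤ, (μ (cell h i) / ENNReal.ofReal (h ^ d)) *
      ∫⁻ _ in cell h i, (1 : ℝ≥0∞) = μ (cell h i) := by
    intro i
    rw [setLIntegral_const, one_mul, volume_cell hh, ENNReal.div_mul_cancel hH0 hHt]
  rw [tsum_congr this, ← measure_iUnion (pairwise_disjoint_cell h)
    (fun i => measurableSet_cell hh i), iUnion_cell]

instance : Countable (Fin d → ℤ) := inferInstance


lemma cellCenter_apply (h : ℝ) (i : Fin d → ℤ) (l : Fin d) :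
    cellCenter h i l = (i l : ℝ) * h := rfl

lemma norm_le_of_coords {x : Euc d} {c : ℝ} (hc : 0 ≤ c) (hx : ∀ l, |x l| ≤ c) :
    ‖x‖ ≤ Real.sqrt d * c := by
  rw [EuclideanSpace.norm_eq]
  have : ∑ l, ‖x l‖ ^ 2 ≤ ∑ _l : Fin d, c ^ 2 := by
    refine Finset.sum_le_sum fun l _ => ?_
    rw [Real.norm_eq_abs]
    exact pow_le_pow_left₀ (abs_nonneg _) (hx l) 2
  calc Real.sqrt (∑ l, ‖x l‖ ^ 2) ≤ Real.sqrt (∑ _l : Fin d, c ^ 2) :=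
        Real.sqrt_le_sqrt this
    _ = Real.sqrt (d * c ^ 2) := by rw [Finset.sum_const]; simp [mul_comm]
    _ = Real.sqrt d * c := by
        rw [Real.sqrt_mul (Nat.cast_nonneg d), Real.sqrt_sq hc]

lemma dist_cellCenter {h : ℝ} (hh : 0 < h) {x : Euc d} {i : Fin d → ℤ}
    (hx : x ∈ cell h i) : ‖x - cellCenter h i‖ ≤ Real.sqrt d * (h / 2) := by
  refine norm_le_of_coords (by linarith) fun l => ?_
  have hx' := (cellIdx_eq_iff hh x i).mp hx l
  have : (x - cellCenter h i) l = x l - (i l : ℝ) * h := by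
    simp [cellCenter_apply]
  rw [this, abs_le]
  constructor <;> nlinarith [hx'.1, hx'.2]


def nmom (ν : Measure (Euc d)) : ℝ≥0∞ := ∫⁻ x, (‖x‖₊ : ℝ≥0∞) ∂ν

lemma measurable_ennnorm : Measurable fun x : Euc d => (‖x‖₊ : ℝ≥0∞) :=
  measurable_nnnorm.coe_nnreal_ennreal

lemma nmom_discretize {h : ℝ} (hh : 0 < h) (μ : Measure (Euc d)) [IsProbabilityMeasure μ] :
    nmom (discretize h μ) ≤ nmom μ + ENNReal.ofReal (Real.sqrt d * h) := by
  set c := ENNReal.ofReal (Real.sqrt d * (h / 2)) with hc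
  set H := ENNReal.ofReal (h ^ d) with hHdef
  have hH0 : H ≠ 0 := by simp [hHdef, ENNReal.ofReal_eq_zero, not_le, pow_pos hh]
  have hHt : H ≠ ∞ := ENNReal.ofReal_ne_top
  have hsd : (0:ℝ) ≤ Real.sqrt d * (h / 2) := by positivity
  have key : ∀ i : Fin d → ℤ, (μ (cell h i) / H) * (∫⁻ x in cell h i, (‖x‖₊ : ℝ≥0∞)) ≤
      ∫⁻ y in cell h i, ((‖y‖₊ : ℝ≥0∞) + (c + c)) ∂μ := by
    intro i
    have h1 : (∫⁻ x in cell h i, (‖x‖₊ : ℝ≥0∞)) ≤ ((‖cellCenter h i‖₊ : ℝ≥0∞) + c) * H := by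
      calc (∫⁻ x in cell h i, (‖x‖₊ : ℝ≥0∞))
          ≤ ∫⁻ _x in cell h i, ((‖cellCenter h i‖₊ : ℝ≥0∞) + c) := by
            refine setLIntegral_mono' (measurableSet_cell hh i) fun x hx => ?_
            rw [← enorm_eq_nnnorm, ← enorm_eq_nnnorm, ← ofReal_norm, ← ofReal_norm, hc,
              ← ENNReal.ofReal_add (norm_nonneg _) hsd]
            refine ENNReal.ofReal_le_ofReal ?_
            have h2 := dist_cellCenter hh hx
            have h3 := norm_sub_norm_le x (cellCenter h i)
            linarith
        _ = _ := by rw [setLIntegral_const, volume_cell hh]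
    calc (μ (cell h i) / H) * (∫⁻ x in cell h i, (‖x‖₊ : ℝ≥0∞))
        ≤ (μ (cell h i) / H) * (((‖cellCenter h i‖₊ : ℝ≥0∞) + c) * H) :=
          mul_le_mul_right h1 _
      _ = ((‖cellCenter h i‖₊ : ℝ≥0∞) + c) * μ (cell h i) := by
          rw [mul_comm (μ (cell h i) / H), mul_assoc, mul_comm H,
            ENNReal.div_mul_cancel hH0 hHt]
      _ = ∫⁻ _y in cell h i, ((‖cellCenter h i‖₊ : ℝ≥0∞) + c) ∂μ := by
          rw [setLIntegral_const]
      _ ≤ ∫⁻ y in cell h i, ((‖y‖₊ : ℝ≥0∞) + (c + c)) ∂μ := by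
          refine setLIntegral_mono' (measurableSet_cell hh i) fun y hy => ?_
          rw [← enorm_eq_nnnorm, ← enorm_eq_nnnorm, ← ofReal_norm, ← ofReal_norm, hc,
            ← ENNReal.ofReal_add hsd hsd,
            ← ENNReal.ofReal_add (norm_nonneg _) hsd,
            ← ENNReal.ofReal_add (norm_nonneg _) (by positivity)]
          refine ENNReal.ofReal_le_ofReal ?_
          have h2 := dist_cellCenter hh hy
          have h3 := norm_sub_norm_le y (cellCenter h i)
          have h4 := abs_norm_sub_norm_le y (cellCenter h i)
          rw [abs_le] at h4
          linarith [h4.1]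
  calc nmom (discretize h μ)
      = ∑' i : Fin d → ℤ, (μ (cell h i) / H) * ∫⁻ x in cell h i, (‖x‖₊ : ℝ≥0∞) :=
        lintegral_discretize hh μ measurable_ennnorm
    _ ≤ ∑' i : Fin d → ℤ, ∫⁻ y in cell h i, ((‖y‖₊ : ℝ≥0∞) + (c + c)) ∂μ :=
        ENNReal.tsum_le_tsum key
    _ = ∫⁻ y, ((‖y‖₊ : ℝ≥0∞) + (c + c)) ∂μ :=
        (lintegral_eq_tsum_cell hh μ _).symm
    _ = nmom μ + (c + c) * μ Set.univ := by
        rw [lintegral_add_right _ measurable_const, lintegral_const]; rfl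
    _ = nmom μ + ENNReal.ofReal (Real.sqrt d * h) := by
        rw [measure_univ, mul_one, hc, ← ENNReal.ofReal_add hsd hsd]
        congr 1; ring

lemma nmom_map (ν : Measure (Euc d)) [IsProbabilityMeasure ν]
    {γ : Euc d → Euc d} (hγ : Measurable γ) {K : ℝ} (hK0 : 0 ≤ K)
    (hK : ∀ x, ‖γ x‖ ≤ ‖x‖ + K) :
    nmom (ν.map γ) ≤ nmom ν + ENNReal.ofReal K := by
  rw [nmom, lintegral_map measurable_ennnorm hγ]
  calc ∫⁻ x, (‖γ x‖₊ : ℝ≥0∞) ∂ν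
      ≤ ∫⁻ x, ((‖x‖₊ : ℝ≥0∞) + ENNReal.ofReal K) ∂ν := by
        refine lintegral_mono fun x => ?_
        rw [← enorm_eq_nnnorm, ← enorm_eq_nnnorm, ← ofReal_norm, ← ofReal_norm,
          ← ENNReal.ofReal_add (norm_nonneg _) hK0]
        exact ENNReal.ofReal_le_ofReal (hK x)
    _ = nmom ν + ENNReal.ofReal K := by
        rw [lintegral_add_right _ measurable_const, lintegral_const, measure_univ, mul_one]
        rfl

lemma isProbabilityMeasure_discretize {h : ℝ} (hh : 0 < h) (μ : Measure (Euc d))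
    [IsProbabilityMeasure μ] : IsProbabilityMeasure (discretize h μ) :=
  ⟨by rw [discretize_univ hh]; exact measure_univ⟩

lemma integrable_norm_of_nmom_ne_top {ν : Measure (Euc d)} (hν : nmom ν ≠ ∞) :
    Integrable (fun x : Euc d => ‖x‖) ν := by
  refine ⟨continuous_norm.aestronglyMeasurable, ?_⟩
  rw [HasFiniteIntegral]
  simp only [enorm_norm]
  exact lt_of_le_of_ne le_top hν

lemma integral_norm_eq_toReal_nmom (ν : Measure (Euc d)) :
    ∫ x, ‖x‖ ∂ν = (nmom ν).toReal := by
  have := integral_norm_eq_lintegral_enorm (f := fun x : Euc d => x)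
    aestronglyMeasurable_id (μ := ν)
  exact this


lemma measurable_gamma (v : Measure (Euc d) → Euc d → Euc d) {h : ℝ} (Δt : ℝ)
    (μ : Measure (Euc d)) :
    Measurable (fun x : Euc d => x + Δt • vhat v h μ x) := by
  have hv : Measurable (vhat v h μ) :=
    measurable_comp_cellIdx (fun i => v μ (cellCenter h i))
  exact measurable_id.add (hv.const_smul Δt)

lemma fd_induction {d : ℕ} (v : Measure (Euc d) → Euc d → Euc d) (V : ℝ) (hV : 0 < V)
    (hbound : ∀ μ, P1 μ → ∀ x, ‖v μ x‖ ≤ V)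
    (μbar : Measure (Euc d)) (hμbar : P1 μbar)
    {Δt h : ℝ} (hΔt : 0 < Δt) (hh : 0 < h) :
    ∀ n : ℕ, P1 (fdScheme v μbar h Δt n) ∧
      nmom (fdScheme v μbar h Δt n) ≤ ENNReal.ofReal
        ((∫ x, ‖x‖ ∂μbar) + n * (V * Δt + Real.sqrt d * h) + Real.sqrt d * h) := by
  haveI : IsProbabilityMeasure μbar := hμbar.1
  have hM0 : (0:ℝ) ≤ ∫ x, ‖x‖ ∂μbar := integral_nonneg fun x => norm_nonneg x
  have hsd : (0:ℝ) ≤ Real.sqrt d * h := by positivity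
  have hMbar : nmom μbar = ENNReal.ofReal (∫ x, ‖x‖ ∂μbar) := by
    rw [integral_norm_eq_toReal_nmom, ENNReal.ofReal_toReal]
    have := hμbar.2.2
    rw [HasFiniteIntegral] at this
    simp only [enorm_norm] at this
    exact this.ne
  intro n
  induction n with
  | zero =>
    have h0 : fdScheme v μbar h Δt 0 = discretize h μbar := rfl
    haveI : IsProbabilityMeasure (fdScheme v μbar h Δt 0) := by
      rw [h0]; exact isProbabilityMeasure_discretize hh μbar
    have hb : nmom (fdScheme v μbar h Δt 0) ≤
        ENNReal.ofReal ((∫ x, ‖x‖ ∂μbar) + Real.sqrt d * h) := by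
      calc nmom (fdScheme v μbar h Δt 0)
          ≤ nmom μbar + ENNReal.ofReal (Real.sqrt d * h) := nmom_discretize hh μbar
        _ = _ := by rw [hMbar, ← ENNReal.ofReal_add hM0 hsd]
    constructor
    · exact ⟨inferInstance, integrable_norm_of_nmom_ne_top
        (ne_top_of_le_ne_top ENNReal.ofReal_ne_top hb)⟩
    · simpa using hb
  | succ n ih =>
    obtain ⟨hP1lam, hmom⟩ := ih
    haveI := hP1lam.1
    set lam := fdScheme v μbar h Δt n with hlam
    have hγ : Measurable (fun x : Euc d => x + Δt • vhat v h lam x) :=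
      measurable_gamma v Δt lam
    have hKpt : ∀ x : Euc d, ‖x + Δt • vhat v h lam x‖ ≤ ‖x‖ + Δt * V := by
      intro x
      calc ‖x + Δt • vhat v h lam x‖ ≤ ‖x‖ + ‖Δt • vhat v h lam x‖ := norm_add_le _ _
        _ = ‖x‖ + |Δt| * ‖vhat v h lam x‖ := by rw [norm_smul, Real.norm_eq_abs]
        _ ≤ ‖x‖ + Δt * V := by
            have := hbound lam hP1lam (cellCenter h (cellIdx h x))
            rw [abs_of_pos hΔt]
            have hvn : ‖vhat v h lam x‖ ≤ V := this
            nlinarith [norm_nonneg (vhat v h lam x)]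
    haveI hmapP : IsProbabilityMeasure (lam.map (fun x => x + Δt • vhat v h lam x)) :=
      Measure.isProbabilityMeasure_map hγ.aemeasurable
    have hstep : fdScheme v μbar h Δt (n+1) =
        discretize h (lam.map (fun x => x + Δt • vhat v h lam x)) := rfl
    haveI : IsProbabilityMeasure (fdScheme v μbar h Δt (n+1)) := by
      rw [hstep]; exact isProbabilityMeasure_discretize hh _
    have hb : nmom (fdScheme v μbar h Δt (n+1)) ≤ ENNReal.ofReal
        ((∫ x, ‖x‖ ∂μbar) + (n+1 : ℕ) * (V * Δt + Real.sqrt d * h) + Real.sqrt d * h) := by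
      calc nmom (fdScheme v μbar h Δt (n+1))
          ≤ nmom (lam.map (fun x => x + Δt • vhat v h lam x))
              + ENNReal.ofReal (Real.sqrt d * h) := by
            rw [hstep]; exact nmom_discretize hh _
        _ ≤ nmom lam + ENNReal.ofReal (Δt * V) + ENNReal.ofReal (Real.sqrt d * h) := by
            gcongr
            exact nmom_map lam hγ (by positivity) hKpt
        _ ≤ ENNReal.ofReal ((∫ x, ‖x‖ ∂μbar) + n * (V * Δt + Real.sqrt d * h)
              + Real.sqrt d * h) + ENNReal.ofReal (Δt * V)
              + ENNReal.ofReal (Real.sqrt d * h) := by gcongr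
        _ = ENNReal.ofReal ((∫ x, ‖x‖ ∂μbar) + (n+1 : ℕ) * (V * Δt + Real.sqrt d * h)
              + Real.sqrt d * h) := by
            rw [← ENNReal.ofReal_add (by positivity) (by positivity),
              ← ENNReal.ofReal_add (by positivity) hsd]
            congr 1
            push_cast
            ring
    refine ⟨⟨inferInstance, integrable_norm_of_nmom_ne_top
      (ne_top_of_le_ne_top ENNReal.ofReal_ne_top hb)⟩, hb⟩

end FD

/-- Lemma 7 of the paper.
For the fully discrete scheme with `h_k = β_k Δt_k` (`β_k > 0`, `β_k → 0`), every
`λ_n^k` belongs to `P₁(ℝ^d)` with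
`∫‖x‖ dλ_n^k ≤ ∫‖x‖ dμ̄ + (V + 2√d β_k) t_n^k + √d h_k` where `t_n^k = n Δt_k`;
in particular the first moments are uniformly bounded in `n` and `k`. -/
theorem fdScheme_first_moment_bounds
    (d : ℕ) (hd : 1 ≤ d)
    (v : Measure (Euc d) → Euc d → Euc d) (V : ℝ) (hV : 0 < V)
    (hbound : ∀ μ, P1 μ → ∀ x, ‖v μ x‖ ≤ V)
    (T : ℝ) (hT : 0 < T)
    (μbar : Measure (Euc d)) (hμbar : P1 μbar)
    (Δt h : ℕ → ℝ) (N : ℕ → ℕ)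
    (hΔtpos : ∀ k, 0 < Δt k) (hhpos : ∀ k, 0 < h k)
    (hNT : ∀ k, (N k : ℝ) * Δt k = T)
    (hΔt0 : Tendsto Δt atTop (nhds 0))
    (β : ℕ → ℝ) (hβpos : ∀ k, 0 < β k) (hβ : ∀ k, h k = β k * Δt k)
    (hβ0 : Tendsto β atTop (nhds 0)) :
    (∀ k : ℕ, ∀ n ≤ N k,
      P1 (fdScheme v μbar (h k) (Δt k) n) ∧
      (∫ x, ‖x‖ ∂(fdScheme v μbar (h k) (Δt k) n)) ≤
        (∫ x, ‖x‖ ∂μbar) + (V + 2 * Real.sqrt d * β k) * (n * Δt k) +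
          Real.sqrt d * h k) ∧
    ∃ C : ℝ, ∀ k : ℕ, ∀ n ≤ N k,
      (∫ x, ‖x‖ ∂(fdScheme v μbar (h k) (Δt k) n)) ≤ C := by
  --

  have hM0 : (0:ℝ) ≤ ∫ x, ‖x‖ ∂μbar := integral_nonneg fun x => norm_nonneg x
  have hsd : (0:ℝ) ≤ Real.sqrt d := Real.sqrt_nonneg _
  have part1 : ∀ k : ℕ, ∀ n ≤ N k,
      P1 (fdScheme v μbar (h k) (Δt k) n) ∧
      (∫ x, ‖x‖ ∂(fdScheme v μbar (h k) (Δt k) n)) ≤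
        (∫ x, ‖x‖ ∂μbar) + (V + 2 * Real.sqrt d * β k) * (n * Δt k) +
          Real.sqrt d * h k := by
    intro k n hn
    obtain ⟨hP1, hmom⟩ :=
      FD.fd_induction v V hV hbound μbar hμbar (hΔtpos k) (hhpos k) n
    refine ⟨hP1, ?_⟩
    have hBnn : (0:ℝ) ≤ (∫ x, ‖x‖ ∂μbar) + n * (V * Δt k + Real.sqrt d * h k)
        + Real.sqrt d * h k := by
      have h1 : (0:ℝ) ≤ (n:ℝ) * (V * Δt k + Real.sqrt d * h k) := by
        have := (hΔtpos k).le; have := (hhpos k).le; positivity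
      have h2 : (0:ℝ) ≤ Real.sqrt d * h k := by
        have := (hhpos k).le; positivity
      linarith
    have hreal : (∫ x, ‖x‖ ∂(fdScheme v μbar (h k) (Δt k) n)) ≤
        (∫ x, ‖x‖ ∂μbar) + n * (V * Δt k + Real.sqrt d * h k) + Real.sqrt d * h k := by
      rw [FD.integral_norm_eq_toReal_nmom]
      have := ENNReal.toReal_mono ENNReal.ofReal_ne_top hmom
      rwa [ENNReal.toReal_ofReal hBnn] at this
    refine hreal.trans ?_
    have hkey : (n:ℝ) * (V * Δt k + Real.sqrt d * h k) ≤
        (V + 2 * Real.sqrt d * β k) * (n * Δt k) := by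
      rw [hβ k]
      have hnn : (0:ℝ) ≤ (n:ℝ) := Nat.cast_nonneg n
      nlinarith [mul_nonneg (mul_nonneg (mul_nonneg hsd (hβpos k).le) hnn) (hΔtpos k).le]
    linarith
  refine ⟨part1, ?_⟩
  obtain ⟨Bβ, hBβ⟩ := hβ0.bddAbove_range
  obtain ⟨BΔ, hBΔ⟩ := hΔt0.bddAbove_range
  rw [mem_upperBounds] at hBβ hBΔ
  have hBβ' : ∀ k, β k ≤ Bβ := fun k => hBβ _ ⟨k, rfl⟩
  have hBΔ' : ∀ k, Δt k ≤ BΔ := fun k => hBΔ _ ⟨k, rfl⟩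
  have hBβ0 : 0 < Bβ := lt_of_lt_of_le (hβpos 0) (hBβ' 0)
  have hBΔ0 : 0 < BΔ := lt_of_lt_of_le (hΔtpos 0) (hBΔ' 0)
  refine ⟨(∫ x, ‖x‖ ∂μbar) + (V + 2 * Real.sqrt d * Bβ) * T + Real.sqrt d * (Bβ * BΔ),
    fun k n hn => ?_⟩
  have hmom := (part1 k n hn).2
  have hnT : (n:ℝ) * Δt k ≤ T := by
    rw [← hNT k]
    exact mul_le_mul_of_nonneg_right (Nat.cast_le.2 hn) (hΔtpos k).le
  have h1 : (V + 2 * Real.sqrt d * β k) * ((n:ℝ) * Δt k) ≤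
      (V + 2 * Real.sqrt d * Bβ) * T := by
    refine mul_le_mul ?_ hnT ?_ ?_
    · nlinarith [hBβ' k]
    · exact mul_nonneg (Nat.cast_nonneg n) (hΔtpos k).le
    · nlinarith
  have h2 : Real.sqrt d * h k ≤ Real.sqrt d * (Bβ * BΔ) := by
    refine mul_le_mul_of_nonneg_left ?_ hsd
    rw [hβ k]
    exact mul_le_mul (hBβ' k) (hBΔ' k) (hΔtpos k).le hBβ0.le
  linarith


end
end

section
/- For the fully discrete scheme with h_k = β_kΔt_k (β_k > 0, β_k → 0) and β̄ := sup_{k≥0} β_k, the interpolated curves satisfy W₁(Λ_s^k, Λ_t^k) ≤ (V + 2√d β̄)|t−s| for all s, t ∈ [0,T] and all k ≥ 0 (uniform Lipschitz continuity); moreover sup_{k≥0} sup_{t∈[0,T]} ∫|x| dΛ_t^k(x) < +∞. -/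
open MeasureTheory Metric Filter

noncomputable section

namespace FDAux

variable {d : ℕ}

lemma measurable_euc_apply (l : Fin d) : Measurable fun x : Euc d => x l :=
  (measurable_pi_apply l).comp ((MeasurableEquiv.toLp 2 (Fin d → ℝ)).symm).measurable

lemma measurable_cellIdx (h : ℝ) : Measurable (cellIdx (d := d) h) :=
  measurable_pi_lambda _ fun l =>
    Measurable.floor (((measurable_euc_apply l).div_const h).add_const _)

lemma cell_eq_preimage (h : ℝ) (i : Fin d → ℤ) : cell h i = cellIdx h ⁻¹' {i} := rfl

lemma measurableSet_cell (h : ℝ) (i : Fin d → ℤ) : MeasurableSet (cell h i) :=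
  measurable_cellIdx h (measurableSet_singleton i)

lemma cellCenter_apply (h : ℝ) (i : Fin d → ℤ) (l : Fin d) :
    cellCenter (d := d) h i l = (i l : ℝ) * h := rfl

lemma norm_sub_cellCenter {h : ℝ} (hh : 0 < h) (x : Euc d) :
    ‖x - cellCenter h (cellIdx h x)‖ ≤ Real.sqrt d * h / 2 := by
  have key : ∀ l, ‖(x - cellCenter h (cellIdx h x)) l‖ ≤ h / 2 := by
    intro l
    have hl : (x - cellCenter h (cellIdx h x)) l = x l - (cellIdx h x l : ℝ) * h := rfl
    have h1 : ((cellIdx h x l : ℝ)) ≤ x l / h + 1/2 := Int.floor_le _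
    have h2 : x l / h + 1/2 < (cellIdx h x l : ℝ) + 1 := Int.lt_floor_add_one _
    have hx : x l / h * h = x l := div_mul_cancel₀ _ hh.ne'
    rw [hl, Real.norm_eq_abs, abs_le]
    constructor
    · nlinarith [mul_lt_mul_of_pos_right h2 hh]
    · nlinarith [mul_le_mul_of_nonneg_right h1 hh.le]
  rw [EuclideanSpace.norm_eq]
  calc Real.sqrt (∑ l, ‖(x - cellCenter h (cellIdx h x)) l‖ ^ 2)
      ≤ Real.sqrt (∑ _l : Fin d, (h/2) ^ 2) := by
        apply Real.sqrt_le_sqrt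
        apply Finset.sum_le_sum
        intro l _
        have := key l
        have : (0:ℝ) ≤ ‖(x - cellCenter h (cellIdx h x)) l‖ := norm_nonneg _
        nlinarith [key l, norm_nonneg ((x - cellCenter h (cellIdx h x)) l)]
    _ = Real.sqrt ((d : ℝ) * (h/2)^2) := by
        rw [Finset.sum_const, Finset.card_univ, Fintype.card_fin, nsmul_eq_mul]
    _ = Real.sqrt d * (h/2) := by
        rw [Real.sqrt_mul (by positivity), Real.sqrt_sq (by positivity)]
    _ = Real.sqrt d * h / 2 := by ring

lemma volume_cell {h : ℝ} (hh : 0 < h) (i : Fin d → ℤ) :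
    volume (cell h i) = ENNReal.ofReal (h ^ d) := by
  have hmem : cell h i = ((MeasurableEquiv.toLp 2 (Fin d → ℝ)).symm) ⁻¹'
      (Set.univ.pi fun l => Set.Ico (((i l : ℝ) - 1/2) * h) (((i l : ℝ) + 1/2) * h)) := by
    ext x
    simp only [cell, Set.mem_setOf_eq, Set.mem_preimage, Set.mem_pi, Set.mem_univ,
      forall_true_left, Set.mem_Ico, funext_iff]
    refine forall_congr' fun l => ?_
    have hxl : ((MeasurableEquiv.toLp 2 (Fin d → ℝ)).symm) x l = x l := rfl
    rw [hxl]
    rw [cellIdx, Int.floor_eq_iff]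
    constructor
    · rintro ⟨h1, h2⟩
      have hx : x l / h * h = x l := div_mul_cancel₀ _ hh.ne'
      constructor
      · nlinarith [mul_le_mul_of_nonneg_right h1 hh.le]
      · nlinarith [mul_lt_mul_of_pos_right h2 hh]
    · rintro ⟨h1, h2⟩
      have ha : (i l : ℝ) - 1/2 ≤ x l / h := (le_div_iff₀ hh).2 h1
      have hb : x l / h < (i l : ℝ) + 1/2 := (div_lt_iff₀ hh).2 h2
      constructor <;> linarith
  rw [hmem, (EuclideanSpace.volume_preserving_symm_measurableEquiv_toLp (Fin d)).measure_preimage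
    ((MeasurableSet.univ_pi fun l => measurableSet_Ico).nullMeasurableSet)]
  rw [volume_pi_pi]
  have : ∀ l : Fin d, volume (Set.Ico (((i l : ℝ) - 1/2) * h) (((i l : ℝ) + 1/2) * h))
      = ENNReal.ofReal h := by
    intro l
    rw [Real.volume_Ico]
    congr 1
    ring
  simp only [this, Finset.prod_const, Finset.card_univ, Fintype.card_fin]
  rw [← ENNReal.ofReal_pow hh.le]

lemma measurable_density (h : ℝ) (μ : Measure (Euc d)) :
    Measurable fun x : Euc d => μ (cell h (cellIdx h x)) / ENNReal.ofReal (h ^ d) :=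
  (measurable_of_countable fun i : Fin d → ℤ => μ (cell h i) / ENNReal.ofReal (h ^ d)).comp
    (measurable_cellIdx h)

lemma discretize_apply_cell {h : ℝ} (hh : 0 < h) (μ : Measure (Euc d)) (i : Fin d → ℤ) :
    discretize h μ (cell h i) = μ (cell h i) := by
  rw [discretize, withDensity_apply _ (measurableSet_cell h i)]
  rw [setLIntegral_congr_fun (measurableSet_cell h i)
    ((fun x hx => by rw [show cellIdx h x = i from hx] :
      ∀ x : Euc d, x ∈ cell h i →
        μ (cell h (cellIdx h x)) / ENNReal.ofReal (h ^ d)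
          = μ (cell h i) / ENNReal.ofReal (h ^ d)))]
  rw [setLIntegral_const, volume_cell hh]
  exact ENNReal.div_mul_cancel (by positivity) ENNReal.ofReal_ne_top

lemma map_cellIdx_discretize {h : ℝ} (hh : 0 < h) (μ : Measure (Euc d)) :
    (discretize h μ).map (cellIdx h) = μ.map (cellIdx h) := by
  refine Measure.ext_of_singleton fun i => ?_
  rw [Measure.map_apply (measurable_cellIdx h) (measurableSet_singleton i),
    Measure.map_apply (measurable_cellIdx h) (measurableSet_singleton i)]
  exact discretize_apply_cell hh μ i

lemma discretize_univ {h : ℝ} (hh : 0 < h) (μ : Measure (Euc d)) :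
    discretize h μ Set.univ = μ Set.univ := by
  have h1 := congrArg (fun ν : Measure (Fin d → ℤ) => ν Set.univ) (map_cellIdx_discretize hh μ)
  simpa [Measure.map_apply (measurable_cellIdx h) MeasurableSet.univ] using h1

lemma isProbabilityMeasure_discretize {h : ℝ} (hh : 0 < h) (μ : Measure (Euc d))
    [IsProbabilityMeasure μ] : IsProbabilityMeasure (discretize h μ) :=
  ⟨by rw [discretize_univ hh]; exact measure_univ⟩

lemma integral_comp_cellIdx {h : ℝ} (hh : 0 < h) (μ : Measure (Euc d)) (g : (Fin d → ℤ) → ℝ) :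
    ∫ x, g (cellIdx h x) ∂(discretize h μ) = ∫ x, g (cellIdx h x) ∂μ := by
  have hg : Measurable g := measurable_of_countable g
  rw [← integral_map (measurable_cellIdx h).aemeasurable hg.stronglyMeasurable.aestronglyMeasurable,
    ← integral_map (measurable_cellIdx h).aemeasurable hg.stronglyMeasurable.aestronglyMeasurable,
    map_cellIdx_discretize hh]

lemma integrable_comp_cellIdx {h : ℝ} (hh : 0 < h) (μ : Measure (Euc d)) (g : (Fin d → ℤ) → ℝ)
    (hg : Integrable (fun x => g (cellIdx h x)) μ) :
    Integrable (fun x => g (cellIdx h x)) (discretize h μ) := by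
  have hgm : Measurable g := measurable_of_countable g
  have h1 := (integrable_map_measure hgm.stronglyMeasurable.aestronglyMeasurable
    (measurable_cellIdx (d := d) h).aemeasurable (μ := discretize h μ) (f := cellIdx h))
  have h2 := (integrable_map_measure hgm.stronglyMeasurable.aestronglyMeasurable
    (measurable_cellIdx (d := d) h).aemeasurable (μ := μ) (f := cellIdx h))
  rw [← Function.comp_def] at hg ⊢
  rw [← h1, map_cellIdx_discretize hh, h2]
  exact hg

lemma lipschitz_integrable {μ : Measure (Euc d)} [IsFiniteMeasure μ]
    (hμ : Integrable (fun x => ‖x‖) μ) {K : NNReal} {φ : Euc d → ℝ} (hφ : LipschitzWith K φ) :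
    Integrable φ μ := by
  refine ((integrable_const (|φ 0|)).add (hμ.const_mul (K : ℝ))).mono'
    hφ.continuous.aestronglyMeasurable (ae_of_all _ fun x => ?_)
  have h1 : dist (φ x) (φ 0) ≤ (K : ℝ) * dist x 0 := hφ.dist_le_mul x 0
  rw [Real.dist_eq, dist_zero_right] at h1
  have h2 : |φ x| - |φ 0| ≤ |φ x - φ 0| := abs_sub_abs_le_abs_sub _ _
  show ‖φ x‖ ≤ |φ 0| + (K : ℝ) * ‖x‖
  rw [Real.norm_eq_abs]
  linarith

/-- Main discretization comparison: integrals of 1-Lipschitz functions move by at most `√d h`. -/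
lemma discretize_close {h : ℝ} (hh : 0 < h) (μ : Measure (Euc d))
    [IsProbabilityMeasure μ] (hμ : Integrable (fun x => ‖x‖) μ)
    {φ : Euc d → ℝ} (hφ : LipschitzWith 1 φ) :
    Integrable φ (discretize h μ) ∧
    |∫ x, φ x ∂(discretize h μ) - ∫ x, φ x ∂μ| ≤ Real.sqrt d * h := by
  have hPd : IsProbabilityMeasure (discretize h μ) := isProbabilityMeasure_discretize hh μ
  set g : (Fin d → ℤ) → ℝ := fun i => φ (cellCenter h i) with hg
  set ψ : Euc d → ℝ := fun x => g (cellIdx h x) with hψ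
  have hψm : Measurable ψ := (measurable_of_countable g).comp (measurable_cellIdx h)
  have hclose : ∀ x, |φ x - ψ x| ≤ Real.sqrt d * h / 2 := by
    intro x
    have h1 : dist (φ x) (φ (cellCenter h (cellIdx h x))) ≤
        1 * dist x (cellCenter h (cellIdx h x)) := hφ.dist_le_mul _ _
    rw [Real.dist_eq, dist_eq_norm, one_mul] at h1
    exact h1.trans (norm_sub_cellCenter hh x)
  have hφμ : Integrable φ μ := lipschitz_integrable hμ hφ
  have hψμ : Integrable ψ μ := by
    refine (hφμ.abs.add (integrable_const (Real.sqrt d * h / 2))).mono'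
      hψm.stronglyMeasurable.aestronglyMeasurable (ae_of_all _ fun x => ?_)
    have := hclose x
    have h2 : |ψ x| - |φ x| ≤ |ψ x - φ x| := abs_sub_abs_le_abs_sub _ _
    rw [abs_sub_comm] at this
    show ‖ψ x‖ ≤ |φ x| + Real.sqrt d * h / 2
    rw [Real.norm_eq_abs]; linarith
  have hψd : Integrable ψ (discretize h μ) := integrable_comp_cellIdx hh μ g hψμ
  have hφd : Integrable φ (discretize h μ) := by
    refine (hψd.abs.add (integrable_const (Real.sqrt d * h / 2))).mono'
      hφ.continuous.aestronglyMeasurable (ae_of_all _ fun x => ?_)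
    have := hclose x
    have h2 : |φ x| - |ψ x| ≤ |φ x - ψ x| := abs_sub_abs_le_abs_sub _ _
    show ‖φ x‖ ≤ |ψ x| + Real.sqrt d * h / 2
    rw [Real.norm_eq_abs]; linarith
  refine ⟨hφd, ?_⟩
  have hint : ∫ x, ψ x ∂(discretize h μ) = ∫ x, ψ x ∂μ := integral_comp_cellIdx hh μ g
  have hb1 : |∫ x, φ x ∂(discretize h μ) - ∫ x, ψ x ∂(discretize h μ)| ≤ Real.sqrt d * h / 2 := by
    rw [← integral_sub hφd hψd]
    have := norm_integral_le_of_norm_le_const (μ := discretize h μ)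
      (f := fun x => φ x - ψ x) (C := Real.sqrt d * h / 2)
      (ae_of_all _ fun x => by rw [Real.norm_eq_abs]; exact hclose x)
    simpa [measure_univ] using this
  have hb2 : |∫ x, φ x ∂μ - ∫ x, ψ x ∂μ| ≤ Real.sqrt d * h / 2 := by
    rw [← integral_sub hφμ hψμ]
    have := norm_integral_le_of_norm_le_const (μ := μ)
      (f := fun x => φ x - ψ x) (C := Real.sqrt d * h / 2)
      (ae_of_all _ fun x => by rw [Real.norm_eq_abs]; exact hclose x)
    simpa [measure_univ] using this
  calc |∫ x, φ x ∂(discretize h μ) - ∫ x, φ x ∂μ|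
      ≤ |∫ x, φ x ∂(discretize h μ) - ∫ x, ψ x ∂(discretize h μ)|
        + |∫ x, φ x ∂μ - ∫ x, ψ x ∂μ| := by
        rw [hint]
        have := abs_sub (∫ x, φ x ∂(discretize h μ) - ∫ x, ψ x ∂μ) 0
        rw [abs_sub_comm (∫ x, φ x ∂μ) (∫ x, ψ x ∂μ)]
        exact abs_sub_le _ (∫ x, ψ x ∂μ) _
    _ ≤ Real.sqrt d * h / 2 + Real.sqrt d * h / 2 := add_le_add hb1 hb2
    _ = Real.sqrt d * h := by ring

/-- Pushforward comparison: if `‖g x − x‖ ≤ c` then integrals of 1-Lipschitz functions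
move by at most `c`. -/
lemma map_close {μ : Measure (Euc d)} [IsProbabilityMeasure μ]
    (hμ : Integrable (fun x => ‖x‖) μ) {g : Euc d → Euc d} (hg : Measurable g)
    {c : ℝ} (hc : ∀ x, ‖g x - x‖ ≤ c)
    {φ : Euc d → ℝ} (hφ : LipschitzWith 1 φ) :
    Integrable φ (μ.map g) ∧ |∫ x, φ x ∂(μ.map g) - ∫ x, φ x ∂μ| ≤ c := by
  have hφμ : Integrable φ μ := lipschitz_integrable hμ hφ
  have hclose : ∀ x, |φ (g x) - φ x| ≤ c := fun x => by
    have h1 : dist (φ (g x)) (φ x) ≤ 1 * dist (g x) x := hφ.dist_le_mul _ _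
    rw [Real.dist_eq, dist_eq_norm, one_mul] at h1
    exact h1.trans (hc x)
  have hcomp : Integrable (fun x => φ (g x)) μ := by
    refine (hφμ.abs.add (integrable_const c)).mono'
      (hφ.continuous.measurable.comp hg).stronglyMeasurable.aestronglyMeasurable
      (ae_of_all _ fun x => ?_)
    have := hclose x
    have h2 : |φ (g x)| - |φ x| ≤ |φ (g x) - φ x| := abs_sub_abs_le_abs_sub _ _
    show ‖φ (g x)‖ ≤ |φ x| + c
    rw [Real.norm_eq_abs]; linarith
  have hmap : ∫ x, φ x ∂(μ.map g) = ∫ x, φ (g x) ∂μ :=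
    integral_map hg.aemeasurable hφ.continuous.aestronglyMeasurable
  constructor
  · rw [integrable_map_measure hφ.continuous.aestronglyMeasurable hg.aemeasurable]
    exact hcomp
  · rw [hmap, ← integral_sub hcomp hφμ]
    have := norm_integral_le_of_norm_le_const (μ := μ)
      (f := fun x => φ (g x) - φ x) (C := c)
      (ae_of_all _ fun x => by rw [Real.norm_eq_abs]; exact hclose x)
    simpa [measure_univ] using this

lemma measurable_vhat (v : Measure (Euc d) → Euc d → Euc d) (h : ℝ) (μ : Measure (Euc d)) :
    Measurable (vhat v h μ) :=
  (measurable_of_countable fun i : Fin d → ℤ => v μ (cellCenter h i)).comp (measurable_cellIdx h)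

lemma measurable_flowmap (v : Measure (Euc d) → Euc d → Euc d) (h Δt : ℝ) (μ : Measure (Euc d)) :
    Measurable fun x : Euc d => x + Δt • vhat v h μ x :=
  measurable_id.add ((measurable_vhat v h μ).const_smul Δt)

section scheme

variable {v : Measure (Euc d) → Euc d → Euc d} {V : ℝ}
  (hbound : ∀ μ, P1 μ → ∀ x, ‖v μ x‖ ≤ V)
  {μbar : Measure (Euc d)} (hμbar : P1 μbar)
  {h Δt : ℝ} (hh : 0 < h) (hΔt : 0 < Δt)

include hbound hμbar hh hΔt

lemma scheme_invariant : ∀ n : ℕ, P1 (fdScheme v μbar h Δt n) ∧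
    (∫ x, ‖x‖ ∂(fdScheme v μbar h Δt n)) ≤
      ((∫ x, ‖x‖ ∂μbar) + Real.sqrt d * h) + n * (V * Δt + Real.sqrt d * h) := by
  have hPμ : IsProbabilityMeasure μbar := hμbar.1
  intro n
  induction n with
  | zero =>
    have h0 := discretize_close hh μbar hμbar.2 lipschitzWith_one_norm
    refine ⟨⟨isProbabilityMeasure_discretize hh μbar, h0.1⟩, ?_⟩
    have := (abs_le.1 h0.2).2
    have h00 : fdScheme v μbar h Δt 0 = discretize h μbar := rfl
    rw [h00]
    simp only [Nat.cast_zero, zero_mul, add_zero]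
    linarith
  | succ n ih =>
    obtain ⟨⟨hPn, hIn⟩, hMn⟩ := ih
    haveI : IsProbabilityMeasure (fdScheme v μbar h Δt n) := hPn
    set lamn := fdScheme v μbar h Δt n with hlamn
    set γ : Euc d → Euc d := fun x => x + Δt • vhat v h lamn x with hγ
    have hγm : Measurable γ := measurable_flowmap v h Δt lamn
    have hγc : ∀ x, ‖γ x - x‖ ≤ V * Δt := by
      intro x
      have : γ x - x = Δt • vhat v h lamn x := by simp [hγ]
      rw [this, norm_smul, Real.norm_eq_abs, abs_of_pos hΔt]
      have := hbound lamn ⟨hPn, hIn⟩ (cellCenter h (cellIdx h x))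
      calc Δt * ‖vhat v h lamn x‖ ≤ Δt * V := by
            apply mul_le_mul_of_nonneg_left _ hΔt.le
            exact this
        _ = V * Δt := mul_comm _ _
    set ν := lamn.map γ with hν
    haveI hPν : IsProbabilityMeasure ν := Measure.isProbabilityMeasure_map hγm.aemeasurable
    have hν1 := map_close hIn hγm hγc lipschitzWith_one_norm
    have hνmom : (∫ x, ‖x‖ ∂ν) ≤ (∫ x, ‖x‖ ∂lamn) + V * Δt := by
      have := (abs_le.1 hν1.2).2; linarith
    have hd := discretize_close hh ν hν1.1 lipschitzWith_one_norm
    have hstep : fdScheme v μbar h Δt (n+1) = discretize h ν := rfl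
    refine ⟨⟨by rw [hstep]; exact isProbabilityMeasure_discretize hh ν, by rw [hstep]; exact hd.1⟩, ?_⟩
    rw [hstep]
    have := (abs_le.1 hd.2).2
    push_cast
    nlinarith [Real.sqrt_nonneg (d : ℝ)]

lemma scheme_step_close {φ : Euc d → ℝ} (hφ : LipschitzWith 1 φ) (n : ℕ) :
    |(∫ x, φ x ∂(fdScheme v μbar h Δt (n+1))) - ∫ x, φ x ∂(fdScheme v μbar h Δt n)|
      ≤ V * Δt + Real.sqrt d * h := by
  obtain ⟨⟨hPn, hIn⟩, -⟩ := scheme_invariant hbound hμbar hh hΔt n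
  haveI : IsProbabilityMeasure (fdScheme v μbar h Δt n) := hPn
  set lamn := fdScheme v μbar h Δt n with hlamn
  set γ : Euc d → Euc d := fun x => x + Δt • vhat v h lamn x with hγ
  have hγm : Measurable γ := measurable_flowmap v h Δt lamn
  have hγc : ∀ x, ‖γ x - x‖ ≤ V * Δt := by
    intro x
    have : γ x - x = Δt • vhat v h lamn x := by simp [hγ]
    rw [this, norm_smul, Real.norm_eq_abs, abs_of_pos hΔt]
    have := hbound lamn ⟨hPn, hIn⟩ (cellCenter h (cellIdx h x))
    calc Δt * ‖vhat v h lamn x‖ ≤ Δt * V := mul_le_mul_of_nonneg_left this hΔt.le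
      _ = V * Δt := mul_comm _ _
  set ν := lamn.map γ with hν
  haveI hPν : IsProbabilityMeasure ν := Measure.isProbabilityMeasure_map hγm.aemeasurable
  have hν1 := map_close hIn hγm hγc lipschitzWith_one_norm
  have hm := map_close hIn hγm hγc hφ
  have hd := discretize_close hh ν hν1.1 hφ
  have hstep : fdScheme v μbar h Δt (n+1) = discretize h ν := rfl
  rw [hstep]
  calc |(∫ x, φ x ∂(discretize h ν)) - ∫ x, φ x ∂lamn|
      ≤ |(∫ x, φ x ∂(discretize h ν)) - ∫ x, φ x ∂ν| + |(∫ x, φ x ∂ν) - ∫ x, φ x ∂lamn| :=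
        abs_sub_le _ _ _
    _ ≤ Real.sqrt d * h + V * Δt := add_le_add hd.2 hm.2
    _ = V * Δt + Real.sqrt d * h := by ring

end scheme

lemma telescope {F : ℕ → ℝ} {L : ℝ} (hF : ∀ n, |F (n+1) - F n| ≤ L) :
    ∀ m n : ℕ, m ≤ n → |F n - F m| ≤ L * ((n : ℝ) - m) := by
  intro m n hmn
  induction n, hmn using Nat.le_induction with
  | base => simp
  | succ n hmn ih =>
    calc |F (n+1) - F m| ≤ |F (n+1) - F n| + |F n - F m| := abs_sub_le _ _ _
      _ ≤ L + L * ((n : ℝ) - m) := add_le_add (hF n) ih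
      _ = L * (((n+1 : ℕ) : ℝ) - m) := by push_cast; ring

/-- The value at `u` of the piecewise-linear interpolation of `F`. -/
def pw (F : ℕ → ℝ) (u : ℝ) : ℝ :=
  (1 - (u - ⌊u⌋₊)) * F ⌊u⌋₊ + (u - ⌊u⌋₊) * F (⌊u⌋₊ + 1)

lemma pw_lip_mono {F : ℕ → ℝ} {L : ℝ} (hL : 0 ≤ L) (hF : ∀ n, |F (n+1) - F n| ≤ L)
    {u w : ℝ} (hu : 0 ≤ u) (huw : u ≤ w) : |pw F w - pw F u| ≤ L * (w - u) := by
  have hw : 0 ≤ w := hu.trans huw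
  have main : ∀ nu nw : ℕ, nu ≤ nw → (nu : ℝ) ≤ u → u < (nu : ℝ) + 1 →
      (nw : ℝ) ≤ w → w < (nw : ℝ) + 1 →
      |((1 - (w - nw)) * F nw + (w - nw) * F (nw + 1)) -
       ((1 - (u - nu)) * F nu + (u - nu) * F (nu + 1))| ≤ L * (w - u) := by
    intro nu nw hnm hnuu hnuu1 hnww hnww1
    rcases eq_or_lt_of_le hnm with heq | hlt
    · subst heq
      have hid : ((1 - (w - nu)) * F nu + (w - nu) * F (nu + 1)) -
          ((1 - (u - nu)) * F nu + (u - nu) * F (nu + 1))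
          = (w - u) * (F (nu + 1) - F nu) := by ring
      rw [hid, abs_mul, abs_of_nonneg (by linarith : (0:ℝ) ≤ w - u)]
      calc (w - u) * |F (nu + 1) - F nu| ≤ (w - u) * L :=
            mul_le_mul_of_nonneg_left (hF nu) (by linarith)
        _ = L * (w - u) := mul_comm _ _
    · have hle : ((nu : ℝ) + 1) ≤ nw := by exact_mod_cast hlt
      set A := (1 - (w - (nw : ℝ))) * F nw + (w - nw) * F (nw + 1) with hA
      set B := (1 - (u - (nu : ℝ))) * F nu + (u - nu) * F (nu + 1) with hB
      have t1 : |A - F nw| ≤ L * (w - nw) := by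
        have hid : A - F nw = (w - nw) * (F (nw + 1) - F nw) := by rw [hA]; ring
        rw [hid, abs_mul, abs_of_nonneg (by linarith)]
        calc (w - nw) * |F (nw + 1) - F nw| ≤ (w - nw) * L :=
              mul_le_mul_of_nonneg_left (hF nw) (by linarith)
          _ = L * (w - nw) := mul_comm _ _
      have t2 : |F nw - F (nu + 1)| ≤ L * ((nw : ℝ) - ((nu : ℝ) + 1)) := by
        have := telescope hF (nu + 1) nw (by exact_mod_cast hlt)
        push_cast at this ⊢
        linarith
      have t3 : |F (nu + 1) - B| ≤ L * (((nu : ℝ) + 1) - u) := by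
        have hid : F (nu + 1) - B = (1 - (u - nu)) * (F (nu + 1) - F nu) := by rw [hB]; ring
        rw [hid, abs_mul, abs_of_nonneg (by linarith)]
        calc (1 - (u - (nu:ℝ))) * |F (nu + 1) - F nu| ≤ (1 - (u - nu)) * L :=
              mul_le_mul_of_nonneg_left (hF nu) (by linarith)
          _ ≤ L * (((nu : ℝ) + 1) - u) := by
              rw [mul_comm]
              exact mul_le_mul_of_nonneg_left (by linarith) hL
      have tri : |A - B| ≤ |A - F nw| + (|F nw - F (nu + 1)| + |F (nu + 1) - B|) := by
        have h1 := abs_sub_le A (F nw) B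
        have h2 := abs_sub_le (F nw) (F (nu + 1)) B
        linarith
      calc |A - B| ≤ L * (w - nw) + (L * ((nw : ℝ) - ((nu : ℝ) + 1)) + L * (((nu : ℝ) + 1) - u)) := by
            linarith
        _ = L * (w - u) := by ring
  have := main ⌊u⌋₊ ⌊w⌋₊ (Nat.floor_mono huw) (Nat.floor_le hu) (Nat.lt_floor_add_one u)
    (Nat.floor_le hw) (Nat.lt_floor_add_one w)
  simpa [pw] using this

lemma pw_lip {F : ℕ → ℝ} {L : ℝ} (hL : 0 ≤ L) (hF : ∀ n, |F (n+1) - F n| ≤ L)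
    {u w : ℝ} (hu : 0 ≤ u) (hw : 0 ≤ w) : |pw F w - pw F u| ≤ L * |w - u| := by
  rcases le_total u w with hc | hc
  · rw [abs_of_nonneg (sub_nonneg.2 hc)]
    exact pw_lip_mono hL hF hu hc
  · rw [abs_sub_comm w u, abs_of_nonneg (sub_nonneg.2 hc), abs_sub_comm]
    exact pw_lip_mono hL hF hw hc

lemma integral_interp {μseq : ℕ → Measure (Euc d)} {Δt : ℝ} (hΔt : 0 < Δt)
    {f : Euc d → ℝ} {t : ℝ} (ht : 0 ≤ t)
    (h1 : Integrable f (μseq ⌊t / Δt⌋₊)) (h2 : Integrable f (μseq (⌊t / Δt⌋₊ + 1))) :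
    ∫ x, f x ∂(interp μseq Δt t) = pw (fun n => ∫ x, f x ∂(μseq n)) (t / Δt) := by
  have ha : (t - ⌊t / Δt⌋₊ * Δt) / Δt = t / Δt - ⌊t / Δt⌋₊ := by field_simp
  have ha0 : 0 ≤ t / Δt - ⌊t / Δt⌋₊ := sub_nonneg.2 (Nat.floor_le (div_nonneg ht hΔt.le))
  have ha1 : 0 ≤ 1 - (t / Δt - ⌊t / Δt⌋₊) := by
    have := Nat.lt_floor_add_one (t / Δt); linarith
  rw [interp, ha,
    integral_add_measure (h1.smul_measure ENNReal.ofReal_ne_top)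
      (h2.smul_measure ENNReal.ofReal_ne_top),
    integral_smul_measure, integral_smul_measure, ENNReal.toReal_ofReal ha1,
    ENNReal.toReal_ofReal ha0, smul_eq_mul, smul_eq_mul, pw]

end FDAux

/-- Lemma 8 of the paper.
For the fully discrete scheme with `h_k = β_k Δt_k` (`β_k > 0`, `β_k → 0`) and
`β̄ = sup_k β_k`, the interpolated curves satisfy
`W₁(Λ_s^k, Λ_t^k) ≤ (V + 2√d β̄)|t−s|` for all `s,t ∈ [0,T]` and all `k`, and the
first moments `∫‖x‖ dΛ_t^k` are uniformly bounded in `t` and `k`. -/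
theorem fdScheme_interpolation_lipschitz_and_moments
    (d : ℕ) (hd : 1 ≤ d)
    (v : Measure (Euc d) → Euc d → Euc d) (V : ℝ) (hV : 0 < V)
    (hbound : ∀ μ, P1 μ → ∀ x, ‖v μ x‖ ≤ V)
    (T : ℝ) (hT : 0 < T)
    (μbar : Measure (Euc d)) (hμbar : P1 μbar)
    (Δt h : ℕ → ℝ) (N : ℕ → ℕ)
    (hΔtpos : ∀ k, 0 < Δt k) (hhpos : ∀ k, 0 < h k)
    (hNT : ∀ k, (N k : ℝ) * Δt k = T)
    (hΔt0 : Tendsto Δt atTop (nhds 0))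
    (β : ℕ → ℝ) (hβpos : ∀ k, 0 < β k) (hβ : ∀ k, h k = β k * Δt k)
    (hβ0 : Tendsto β atTop (nhds 0))
    (βbar : ℝ) (hβbar : βbar = ⨆ k, β k) :
    (∀ k : ℕ, ∀ s ∈ Set.Icc (0:ℝ) T, ∀ t ∈ Set.Icc (0:ℝ) T,
      W1 (interp (fdScheme v μbar (h k) (Δt k)) (Δt k) s)
         (interp (fdScheme v μbar (h k) (Δt k)) (Δt k) t) ≤
        (V + 2 * Real.sqrt d * βbar) * |t - s|) ∧
    ∃ C : ℝ, ∀ k : ℕ, ∀ t ∈ Set.Icc (0:ℝ) T,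
      (∫ x, ‖x‖ ∂(interp (fdScheme v μbar (h k) (Δt k)) (Δt k) t)) ≤ C := by
  have hsd : 0 ≤ Real.sqrt d := Real.sqrt_nonneg _
  have hbddβ : BddAbove (Set.range β) := hβ0.bddAbove_range
  have hβle : ∀ k, β k ≤ βbar := fun k => hβbar ▸ le_ciSup hbddβ k
  have hβbar0 : 0 < βbar := lt_of_lt_of_le (hβpos 0) (hβle 0)
  obtain ⟨D, hDm⟩ := hΔt0.bddAbove_range
  have hD : ∀ k, Δt k ≤ D := fun k => hDm ⟨k, rfl⟩
  have hD0 : 0 < D := lt_of_lt_of_le (hΔtpos 0) (hD 0)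
  set c := V + 2 * Real.sqrt d * βbar with hc
  have hc0 : 0 < c := by positivity
  -- per-step bound for 1-Lipschitz φ
  have hstep : ∀ k : ℕ, ∀ φ : Euc d → ℝ, LipschitzWith 1 φ → ∀ n : ℕ,
      |(∫ x, φ x ∂(fdScheme v μbar (h k) (Δt k) (n+1))) -
        ∫ x, φ x ∂(fdScheme v μbar (h k) (Δt k) n)| ≤ c * Δt k := by
    intro k φ hφ n
    have h1 := FDAux.scheme_step_close hbound hμbar (hhpos k) (hΔtpos k) hφ n
    have h2 : Real.sqrt d * h k ≤ Real.sqrt d * βbar * Δt k := by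
      rw [hβ k]
      have : β k * Δt k ≤ βbar * Δt k :=
        mul_le_mul_of_nonneg_right (hβle k) (hΔtpos k).le
      nlinarith
    have h3 : V * Δt k + Real.sqrt d * h k ≤ c * Δt k := by
      rw [hc]
      nlinarith [(hΔtpos k).le, mul_nonneg hsd hβbar0.le, hΔtpos k]
    exact h1.trans h3
  have hint : ∀ k n, ∀ φ : Euc d → ℝ, LipschitzWith 1 φ →
      Integrable φ (fdScheme v μbar (h k) (Δt k) n) := by
    intro k n φ hφ
    obtain ⟨⟨hPn, hIn⟩, -⟩ := FDAux.scheme_invariant hbound hμbar (hhpos k) (hΔtpos k) n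
    haveI := hPn
    exact FDAux.lipschitz_integrable hIn hφ
  constructor
  · intro k s hs t ht
    refine Real.iSup_le (fun φp => ?_) (mul_nonneg hc0.le (abs_nonneg _))
    obtain ⟨φ, hφ⟩ := φp
    have hGs := FDAux.integral_interp (hΔtpos k) hs.1 (hint k _ φ hφ) (hint k _ φ hφ)
    have hGt := FDAux.integral_interp (hΔtpos k) ht.1 (hint k _ φ hφ) (hint k _ φ hφ)
    simp only
    rw [hGs, hGt]
    have hkey := FDAux.pw_lip (F := fun n => ∫ x, φ x ∂(fdScheme v μbar (h k) (Δt k) n))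
      (L := c * Δt k) (mul_nonneg hc0.le (hΔtpos k).le) (fun n => hstep k φ hφ n)
      (u := s / Δt k) (w := t / Δt k)
      (div_nonneg hs.1 (hΔtpos k).le) (div_nonneg ht.1 (hΔtpos k).le)
    have habs : |t / Δt k - s / Δt k| = |t - s| / Δt k := by
      rw [div_sub_div_same, abs_div, abs_of_pos (hΔtpos k)]
    rw [habs] at hkey
    have h4 : Δt k * (|t - s| / Δt k) = |t - s| := by
      rw [← mul_div_assoc]
      exact mul_div_cancel_left₀ _ (hΔtpos k).ne'
    have heq : c * Δt k * (|t - s| / Δt k) = c * |t - s| := by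
      rw [mul_assoc, h4]
    rw [heq] at hkey
    have := (abs_le.1 hkey).2
    linarith [this]
  · refine ⟨((∫ x, ‖x‖ ∂μbar) + Real.sqrt d * (βbar * D))
      + (T + D) * (V + Real.sqrt d * βbar) + Real.sqrt d * (βbar * D), fun k t ht => ?_⟩
    set C := ((∫ x, ‖x‖ ∂μbar) + Real.sqrt d * (βbar * D))
      + (T + D) * (V + Real.sqrt d * βbar) + Real.sqrt d * (βbar * D) with hC
    have hIk : ∀ n, Integrable (fun x => ‖x‖) (fdScheme v μbar (h k) (Δt k) n) :=
      fun n => (FDAux.scheme_invariant hbound hμbar (hhpos k) (hΔtpos k) n).1.2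
    have hE := FDAux.integral_interp (μseq := fdScheme v μbar (h k) (Δt k)) (hΔtpos k) ht.1
      (hIk _) (hIk _)
    rw [hE]
    set n := ⌊t / Δt k⌋₊ with hn
    have hhk : h k ≤ βbar * D := by
      rw [hβ k]
      have h1 : β k * Δt k ≤ βbar * Δt k := mul_le_mul_of_nonneg_right (hβle k) (hΔtpos k).le
      have h2 : βbar * Δt k ≤ βbar * D := mul_le_mul_of_nonneg_left (hD k) hβbar0.le
      linarith
    -- moment bound for m ≤ n + 1
    have hmom : ∀ m : ℕ, (m : ℝ) * Δt k ≤ T + D →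
        (∫ x, ‖x‖ ∂(fdScheme v μbar (h k) (Δt k) m)) ≤ C := by
      intro m hm
      have h1 := (FDAux.scheme_invariant hbound hμbar (hhpos k) (hΔtpos k) m).2
      have h2 : (m : ℝ) * (V * Δt k + Real.sqrt d * h k)
          ≤ (T + D) * (V + Real.sqrt d * βbar) := by
        have e1 : V * Δt k + Real.sqrt d * h k = (V + Real.sqrt d * β k) * Δt k := by
          rw [hβ k]; ring
        rw [e1, ← mul_assoc]
        have hm0 : (0:ℝ) ≤ m := Nat.cast_nonneg m
        have hfac : (0:ℝ) ≤ V + Real.sqrt d * β k := by nlinarith [mul_nonneg hsd (hβpos k).le]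
        calc (m : ℝ) * (V + Real.sqrt d * β k) * Δt k
            = (V + Real.sqrt d * β k) * ((m : ℝ) * Δt k) := by ring
          _ ≤ (V + Real.sqrt d * β k) * (T + D) := by
              apply mul_le_mul_of_nonneg_left hm hfac
          _ ≤ (V + Real.sqrt d * βbar) * (T + D) := by
              apply mul_le_mul_of_nonneg_right _ (by nlinarith [hT, hD0])
              nlinarith [hβle k, hsd]
          _ = (T + D) * (V + Real.sqrt d * βbar) := mul_comm _ _
      have h3 : Real.sqrt d * h k ≤ Real.sqrt d * (βbar * D) :=
        mul_le_mul_of_nonneg_left hhk hsd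
      have h4 : 0 ≤ Real.sqrt d * (βbar * D) :=
        mul_nonneg hsd (mul_nonneg hβbar0.le hD0.le)
      rw [hC]
      linarith
    have hnt : (n : ℝ) * Δt k ≤ T + D := by
      have h1 : (n : ℝ) ≤ t / Δt k := Nat.floor_le (div_nonneg ht.1 (hΔtpos k).le)
      have h2 : (n : ℝ) * Δt k ≤ t := by
        have := mul_le_mul_of_nonneg_right h1 (hΔtpos k).le
        rwa [div_mul_cancel₀ _ (hΔtpos k).ne'] at this
      linarith [ht.2, hD0.le, hD k]
    have hn1t : ((n + 1 : ℕ) : ℝ) * Δt k ≤ T + D := by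
      have h1 : (n : ℝ) ≤ t / Δt k := Nat.floor_le (div_nonneg ht.1 (hΔtpos k).le)
      have h2 : (n : ℝ) * Δt k ≤ t := by
        have := mul_le_mul_of_nonneg_right h1 (hΔtpos k).le
        rwa [div_mul_cancel₀ _ (hΔtpos k).ne'] at this
      push_cast
      have := hD k
      linarith [ht.2]
    have hMn := hmom n hnt
    have hMn1 := hmom (n + 1) hn1t
    have ha0 : 0 ≤ t / Δt k - n := sub_nonneg.2 (Nat.floor_le (div_nonneg ht.1 (hΔtpos k).le))
    have ha1 : 0 ≤ 1 - (t / Δt k - n) := by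
      have := Nat.lt_floor_add_one (t / Δt k); rw [← hn] at this; linarith
    rw [FDAux.pw]
    nlinarith [hMn, hMn1, ha0, ha1]

end
end

section
/- Isotropic interactions: let v_d : ℝ^d → ℝ^d be Lipschitz and bounded, R > 0, N ∈ ℕ, F : ℝ^d → ℝ^d Lipschitz on B_R(0), and χ : ℝ^d → [0,1] Lipschitz with χ(z) = 0 for z ∉ B_R(0). Define v[μ](x) = v_d(x) + N ∫_{ℝ^d} F(y−x) χ(y−x) dμ(y) for μ ∈ P₁(ℝ^d). Then v satisfies Assumption A: (i) |v[μ](x)| ≤ sup|v_d| + N sup_{|z|≤R}|F(z)| for all x, μ; (ii) there is a constant L > 0 with |v[ν](y) − v[μ](x)| ≤ L(|y−x| + W₁(μ,ν)) for all x,y and μ,ν ∈ P₁; (iii) v[αμ+(1−α)ν] = αv[μ]+(1−α)v[ν] for all μ,ν ∈ P₁ and α ∈ [0,1]. -/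
/-!
Write the interaction term as `x ↦ ∫ g (y - x) dμ(y)` with the kernel `g = χ • F`. Since `χ`
vanishes off the ball, on which `F` is bounded and Lipschitz, and `|χ| ≤ 1`, the kernel is bounded
by `sup ‖F‖` and globally Lipschitz; this gives (i). For (ii), moving `x` changes the integrand by a
Lipschitz amount, while changing `μ` is controlled by the easy half of Kantorovich–Rubinstein
duality: composed with a norming functional, a Lipschitz vector field becomes a scalar Lipschitz
test function for `W₁`. Linearity (iii) is linearity of the integral in the measure.
-/

open MeasureTheory Metric Filter

noncomputable section

open scoped NNReal ENNReal

theorem LipschitzWith.comp_sub_const {G β : Type*} [SeminormedAddCommGroup G]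
    [PseudoEMetricSpace β] {K : ℝ≥0} {g : G → β} (hg : LipschitzWith K g) (x : G) :
    LipschitzWith K (fun z => g (z - x)) := by
  have := hg.comp (IsometryEquiv.subRight x).isometry.lipschitz
  rwa [mul_one] at this

theorem IsCompact.norm_le_iSup_norm {X E : Type*} [TopologicalSpace X] [NormedAddCommGroup E]
    {s : Set X} {F : X → E} (hs : IsCompact s) (hF : ContinuousOn F s) {z : X} (hz : z ∈ s) :
    ‖F z‖ ≤ ⨆ z : s, ‖F z.1‖ := by
  obtain ⟨C, hC⟩ := hs.exists_bound_of_continuousOn hF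
  exact le_ciSup (f := fun z : s => ‖F z.1‖) ⟨C, Set.forall_mem_range.2 fun z => hC z.1 z.2⟩
    ⟨z, hz⟩

theorem integral_ofReal_smul_add_ofReal_smul {α E : Type*} [MeasurableSpace α]
    [NormedAddCommGroup E] [NormedSpace ℝ E] {μ ν : Measure α} {f : α → E}
    (hμ : Integrable f μ) (hν : Integrable f ν) {a b : ℝ} (ha : 0 ≤ a) (hb : 0 ≤ b) :
    ∫ x, f x ∂(ENNReal.ofReal a • μ + ENNReal.ofReal b • ν)
      = a • ∫ x, f x ∂μ + b • ∫ x, f x ∂ν := by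
  rw [integral_add_measure (hμ.smul_measure ENNReal.ofReal_ne_top)
    (hν.smul_measure ENNReal.ofReal_ne_top), integral_smul_measure, integral_smul_measure,
    ENNReal.toReal_ofReal ha, ENNReal.toReal_ofReal hb]

section Wasserstein

variable {d : ℕ} {E : Type*} [NormedAddCommGroup E] {μ ν : Measure (Euc d)}

theorem LipschitzWith.integrable_of_P1 {K : ℝ≥0} {f : Euc d → E} (hf : LipschitzWith K f)
    (hμ : P1 μ) : Integrable f μ := by
  have := hμ.1
  refine ((integrable_const ‖f 0‖).add (hμ.2.const_mul K)).mono'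
    hf.continuous.aestronglyMeasurable (ae_of_all _ fun x => ?_)
  calc ‖f x‖ ≤ ‖f 0‖ + ‖f x - f 0‖ := norm_le_norm_add_norm_sub' _ _
    _ ≤ ‖f 0‖ + K * ‖x‖ := by
      simpa [dist_eq_norm] using hf.dist_le_mul x 0

theorem LipschitzWith.norm_integral_sub_apply_zero_le [NormedSpace ℝ E] [CompleteSpace E]
    {K : ℝ≥0} {f : Euc d → E} (hf : LipschitzWith K f) (hμ : P1 μ) :
    ‖∫ x, f x ∂μ - f 0‖ ≤ K * ∫ x, ‖x‖ ∂μ := by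
  have := hμ.1
  calc ‖∫ x, f x ∂μ - f 0‖ = ‖∫ x, (f x - f 0) ∂μ‖ := by
        rw [integral_sub (hf.integrable_of_P1 hμ) (integrable_const _), integral_const,
          probReal_univ, one_smul]
    _ ≤ ∫ x, K * ‖x‖ ∂μ := norm_integral_le_of_norm_le (hμ.2.const_mul K)
        (ae_of_all _ fun x => by simpa [dist_eq_norm] using hf.dist_le_mul x 0)
    _ = K * ∫ x, ‖x‖ ∂μ := integral_const_mul _ _

theorem bddAbove_W1_range (hμ : P1 μ) (hν : P1 ν) :
    BddAbove (Set.range fun φ : {φ : Euc d → ℝ // LipschitzWith 1 φ} =>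
      ∫ x, φ.1 x ∂ν - ∫ x, φ.1 x ∂μ) := by
  refine ⟨(∫ x, ‖x‖ ∂ν) + ∫ x, ‖x‖ ∂μ, Set.forall_mem_range.2 fun ⟨φ, hφ⟩ => ?_⟩
  have hν' := abs_le.1 (by simpa using hφ.norm_integral_sub_apply_zero_le hν)
  have hμ' := abs_le.1 (by simpa using hφ.norm_integral_sub_apply_zero_le hμ)
  dsimp only
  linarith [hν'.2, hμ'.1]

theorem W1_nonneg (hμ : P1 μ) (hν : P1 ν) : 0 ≤ W1 μ ν := by
  rw [W1]
  simpa using le_ciSup (bddAbove_W1_range hμ hν)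
    ⟨fun _ => 0, (LipschitzWith.const 0).weaken zero_le_one⟩

theorem LipschitzWith.integral_sub_integral_le_mul_W1 {K : ℝ≥0} {φ : Euc d → ℝ}
    (hφ : LipschitzWith K φ) (hμ : P1 μ) (hν : P1 ν) :
    ∫ x, φ x ∂ν - ∫ x, φ x ∂μ ≤ K * W1 μ ν := by
  rcases eq_or_ne K 0 with rfl | hK
  · have := hμ.1
    have := hν.1
    have hconst : φ = fun _ => φ 0 := funext fun x => (LipschitzWith.zero_iff φ).1 hφ x 0
    rw [hconst]
    simp
  · have hscaled : LipschitzWith 1 (fun x => (K : ℝ)⁻¹ * φ x) := by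
      simpa [hK, Function.comp_def] using (lipschitzWith_smul (K : ℝ)⁻¹).comp hφ
    have := le_ciSup (bddAbove_W1_range hμ hν) ⟨_, hscaled⟩
    rw [integral_const_mul, integral_const_mul, ← mul_sub] at this
    exact (inv_mul_le_iff₀ (by positivity)).1 this

theorem LipschitzWith.norm_integral_sub_integral_le_mul_W1 [NormedSpace ℝ E] [CompleteSpace E]
    {K : ℝ≥0} {h : Euc d → E} (hh : LipschitzWith K h) (hμ : P1 μ) (hν : P1 ν) :
    ‖∫ x, h x ∂ν - ∫ x, h x ∂μ‖ ≤ K * W1 μ ν := by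
  obtain ⟨ℓ, hℓ1, hℓ⟩ := exists_dual_vector'' ℝ (∫ x, h x ∂ν - ∫ x, h x ∂μ)
  have hℓh : LipschitzWith K (fun x => ℓ (h x)) := by
    have := (ℓ.lipschitzWith_of_opNorm_le (K := 1) (by exact_mod_cast hℓ1)).comp hh
    rwa [one_mul] at this
  rw [RCLike.ofReal_real_eq_id, id] at hℓ
  rw [← hℓ, map_sub, ← ℓ.integral_comp_comm (hh.integrable_of_P1 hν),
    ← ℓ.integral_comp_comm (hh.integrable_of_P1 hμ)]
  exact hℓh.integral_sub_integral_le_mul_W1 hμ hν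

end Wasserstein

section CutoffKernel

variable {X E : Type*} [NormedAddCommGroup E] [NormedSpace ℝ E]
  {χ : X → ℝ} {F : X → E} {s : Set X} {M : ℝ≥0}

theorem norm_smul_le_of_eq_zero_off (hχ1 : ∀ z, |χ z| ≤ 1) (hχs : ∀ z ∉ s, χ z = 0)
    (hM : ∀ z ∈ s, ‖F z‖ ≤ M) (z : X) : ‖χ z • F z‖ ≤ M := by
  by_cases hz : z ∈ s
  · rw [norm_smul, Real.norm_eq_abs]
    exact (mul_le_mul (hχ1 z) (hM z hz) (norm_nonneg _) zero_le_one).trans_eq (one_mul _)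
  · simp [hχs z hz]

theorem lipschitzWith_smul_of_eq_zero_off [PseudoMetricSpace X] {Lχ LF : ℝ≥0}
    (hχ : LipschitzWith Lχ χ) (hχ1 : ∀ z, |χ z| ≤ 1) (hχs : ∀ z ∉ s, χ z = 0)
    (hF : LipschitzOnWith LF F s) (hM : ∀ z ∈ s, ‖F z‖ ≤ M) :
    LipschitzWith (Lχ * M + LF) (fun z => χ z • F z) := by
  have hbound_of_mem : ∀ z ∈ s, ∀ w, dist (χ z • F z) (χ w • F w) ≤ (Lχ * M + LF) * dist z w := by
    intro z hz w
    have hcut : ‖(χ z - χ w) • F z‖ ≤ Lχ * dist z w * M := by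
      rw [norm_smul, ← dist_eq_norm]
      exact mul_le_mul (hχ.dist_le_mul z w) (hM z hz) (norm_nonneg _) (by positivity)
    have hfield : ‖χ w • (F z - F w)‖ ≤ LF * dist z w := by
      by_cases hw : w ∈ s
      · rw [norm_smul, Real.norm_eq_abs, ← dist_eq_norm]
        exact (mul_le_of_le_one_left dist_nonneg (hχ1 w)).trans (hF.dist_le_mul z hz w hw)
      · simp only [hχs w hw, zero_smul, norm_zero]
        positivity
    calc dist (χ z • F z) (χ w • F w) = ‖(χ z - χ w) • F z + χ w • (F z - F w)‖ := by
          rw [dist_eq_norm]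
          congr 1
          module
      _ ≤ Lχ * dist z w * M + LF * dist z w := (norm_add_le _ _).trans (add_le_add hcut hfield)
      _ = (Lχ * M + LF) * dist z w := by ring
  refine LipschitzWith.of_dist_le_mul fun z w => ?_
  by_cases hz : z ∈ s
  · exact hbound_of_mem z hz w
  by_cases hw : w ∈ s
  · rw [dist_comm, dist_comm z]
    exact hbound_of_mem w hw z
  · simp only [hχs z hz, hχs w hw, zero_smul, dist_self]
    positivity

end CutoffKernel

section Velocity

variable {d : ℕ} {E : Type*} [NormedAddCommGroup E] [NormedSpace ℝ E]
  {μ ν : Measure (Euc d)} {vd g : Euc d → E} {c : ℝ}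

theorem LipschitzWith.norm_integral_comp_sub_sub_le [CompleteSpace E] {K : ℝ≥0}
    (hg : LipschitzWith K g) (hμ : P1 μ) (hν : P1 ν) (x y : Euc d) :
    ‖∫ z, g (z - y) ∂ν - ∫ z, g (z - x) ∂μ‖ ≤ K * (‖y - x‖ + W1 μ ν) := by
  have := hν.1
  have hshift : ‖∫ z, g (z - y) ∂ν - ∫ z, g (z - x) ∂ν‖ ≤ K * ‖y - x‖ := by
    rw [← integral_sub ((hg.comp_sub_const y).integrable_of_P1 hν)
      ((hg.comp_sub_const x).integrable_of_P1 hν)]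
    have hpointwise : ∀ z, ‖g (z - y) - g (z - x)‖ ≤ K * ‖y - x‖ := fun z => by
      rw [← dist_eq_norm, ← dist_eq_norm, ← dist_sub_left z]
      exact hg.dist_le_mul _ _
    simpa using norm_integral_le_of_norm_le_const (ae_of_all ν hpointwise)
  have hmeasure := (hg.comp_sub_const x).norm_integral_sub_integral_le_mul_W1 hμ hν
  rw [mul_add]
  exact (norm_sub_le_norm_sub_add_norm_sub _ _ _).trans (add_le_add hshift hmeasure)

theorem norm_add_smul_integral_comp_sub_le [IsProbabilityMeasure μ] {V C : ℝ}
    (hvd : ∀ x, ‖vd x‖ ≤ V) (hg : ∀ z, ‖g z‖ ≤ C) (hc : 0 ≤ c) (x : Euc d) :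
    ‖vd x + c • ∫ y, g (y - x) ∂μ‖ ≤ V + c * C := by
  have hI : ‖∫ y, g (y - x) ∂μ‖ ≤ C := by
    simpa using norm_integral_le_of_norm_le_const (ae_of_all μ fun y => hg (y - x))
  refine (norm_add_le _ _).trans (add_le_add (hvd x) ?_)
  rw [norm_smul, Real.norm_of_nonneg hc]
  gcongr

theorem norm_add_smul_integral_comp_sub_sub_le [CompleteSpace E] {Kd K : ℝ≥0}
    (hvd : LipschitzWith Kd vd) (hg : LipschitzWith K g) (hc : 0 ≤ c) (hμ : P1 μ) (hν : P1 ν)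
    (x y : Euc d) :
    ‖(vd y + c • ∫ z, g (z - y) ∂ν) - (vd x + c • ∫ z, g (z - x) ∂μ)‖
      ≤ (Kd + c * K) * (‖y - x‖ + W1 μ ν) := by
  have hvd' : ‖vd y - vd x‖ ≤ Kd * ‖y - x‖ := by
    simpa [dist_eq_norm] using hvd.dist_le_mul y x
  have hI := hg.norm_integral_comp_sub_sub_le hμ hν x y
  calc _ = ‖(vd y - vd x) + c • (∫ z, g (z - y) ∂ν - ∫ z, g (z - x) ∂μ)‖ := by
        congr 1
        module
    _ ≤ Kd * ‖y - x‖ + c * (K * (‖y - x‖ + W1 μ ν)) := by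
        refine (norm_add_le _ _).trans (add_le_add hvd' ?_)
        rw [norm_smul, Real.norm_of_nonneg hc]
        gcongr
    _ ≤ (Kd + c * K) * (‖y - x‖ + W1 μ ν) := by
        nlinarith [norm_nonneg (y - x), mul_nonneg Kd.coe_nonneg (W1_nonneg hμ hν)]

end Velocity

theorem isotropic_velocity_satisfies_assumptionA_general
    (d : ℕ)
    (vd : Euc d → Euc d) (Kd : NNReal) (hvdlip : LipschitzWith Kd vd)
    (Vd : ℝ) (hvdbdd : ∀ x, ‖vd x‖ ≤ Vd)
    (R : ℝ) (N : ℕ)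
    (F : Euc d → Euc d) (LF : NNReal)
    (hF : LipschitzOnWith LF F (Metric.closedBall 0 R))
    (χ : Euc d → ℝ) (Lχ : NNReal) (hχlip : LipschitzWith Lχ χ)
    (hχrange : ∀ z, χ z ∈ Set.Icc (0:ℝ) 1)
    (hχ0 : ∀ z ∉ Metric.ball (0:Euc d) R, χ z = 0)
    (Fmax : ℝ) (hFmax : Fmax = ⨆ z : Metric.closedBall (0:Euc d) R, ‖F z.1‖)
    (v : Measure (Euc d) → Euc d → Euc d)
    (hv : ∀ μ x, v μ x = vd x + (N : ℝ) • ∫ y, χ (y - x) • F (y - x) ∂μ) :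
    (∀ μ, P1 μ → ∀ x, ‖v μ x‖ ≤ Vd + N * Fmax) ∧
    (∃ L : ℝ, 0 < L ∧ ∀ μ ν, P1 μ → P1 ν → ∀ x y,
      ‖v ν y - v μ x‖ ≤ L * (‖y - x‖ + W1 μ ν)) ∧
    (∀ μ ν, P1 μ → P1 ν → ∀ α : ℝ, 0 ≤ α → α ≤ 1 → ∀ x,
      v (ENNReal.ofReal α • μ + ENNReal.ofReal (1 - α) • ν) x
        = α • v μ x + (1 - α) • v ν x) := by
  have hχ1 : ∀ z, |χ z| ≤ 1 := fun z => abs_le.2 ⟨by linarith [(hχrange z).1], (hχrange z).2⟩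
  have hχs : ∀ z ∉ closedBall (0 : Euc d) R, χ z = 0 :=
    fun z hz => hχ0 z fun h => hz (ball_subset_closedBall h)
  set M : ℝ≥0 := ⟨Fmax, hFmax ▸ Real.iSup_nonneg fun _ => norm_nonneg _⟩
  have hFM : ∀ z ∈ closedBall (0 : Euc d) R, ‖F z‖ ≤ M := fun z hz =>
    show ‖F z‖ ≤ Fmax from
      hFmax ▸ (isCompact_closedBall 0 R).norm_le_iSup_norm hF.continuousOn hz
  set K : ℝ≥0 := Lχ * M + LF
  have hg : LipschitzWith K fun z => χ z • F z :=
    lipschitzWith_smul_of_eq_zero_off hχlip hχ1 hχs hF hFM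
  refine ⟨fun μ hμ x => ?_, ⟨Kd + N * K + 1, by positivity, fun μ ν hμ hν x y => ?_⟩,
    fun μ ν hμ hν α hα0 hα1 x => ?_⟩
  · have := hμ.1
    rw [hv]
    exact norm_add_smul_integral_comp_sub_le hvdbdd (norm_smul_le_of_eq_zero_off hχ1 hχs hFM)
      N.cast_nonneg x
  · rw [hv, hv]
    refine (norm_add_smul_integral_comp_sub_sub_le hvdlip hg N.cast_nonneg hμ hν x y).trans ?_
    exact mul_le_mul_of_nonneg_right (by linarith)
      (add_nonneg (norm_nonneg _) (W1_nonneg hμ hν))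
  · have hint : ∀ ρ, P1 ρ → Integrable (fun y => χ (y - x) • F (y - x)) ρ :=
      fun ρ hρ => (hg.comp_sub_const x).integrable_of_P1 hρ
    rw [hv, hv, hv, integral_ofReal_smul_add_ofReal_smul (hint μ hμ) (hint ν hν) hα0
      (sub_nonneg.2 hα1)]
    module

/-- Proposition 2 of the paper: isotropic interactions.
Let `v_d : ℝ^d → ℝ^d` be Lipschitz and bounded, `R > 0`, `N ∈ ℕ`, `F` Lipschitz on the
ball of radius `R` about the origin, and `χ : ℝ^d → [0,1]` Lipschitz with `χ(z) = 0` for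
`z ∉ B_R(0)`. Then `v[μ](x) = v_d(x) + N ∫ F(y−x) χ(y−x) dμ(y)` satisfies Assumption A:
(i) `|v[μ](x)| ≤ sup|v_d| + N sup_{|z|≤R}|F|`; (ii) combined Lipschitz continuity in `x`
and `μ` (w.r.t. `W₁`); (iii) linearity w.r.t. the measure for convex combinations. -/
theorem isotropic_velocity_satisfies_assumptionA
    (d : ℕ) (hd : 1 ≤ d)
    (vd : Euc d → Euc d) (Kd : NNReal) (hvdlip : LipschitzWith Kd vd)
    (Vd : ℝ) (hVd : Vd = ⨆ x : Euc d, ‖vd x‖) (hvdbdd : ∀ x, ‖vd x‖ ≤ Vd)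
    (R : ℝ) (hR : 0 < R) (N : ℕ)
    (F : Euc d → Euc d) (LF : NNReal)
    (hF : LipschitzOnWith LF F (Metric.closedBall 0 R))
    (χ : Euc d → ℝ) (Lχ : NNReal) (hχlip : LipschitzWith Lχ χ)
    (hχrange : ∀ z, χ z ∈ Set.Icc (0:ℝ) 1)
    (hχ0 : ∀ z ∉ Metric.ball (0:Euc d) R, χ z = 0)
    (Fmax : ℝ) (hFmax : Fmax = ⨆ z : Metric.closedBall (0:Euc d) R, ‖F z.1‖)
    (v : Measure (Euc d) → Euc d → Euc d)
    (hv : ∀ μ x, v μ x = vd x + (N : ℝ) • ∫ y, χ (y - x) • F (y - x) ∂μ) :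
    (∀ μ, P1 μ → ∀ x, ‖v μ x‖ ≤ Vd + N * Fmax) ∧
    (∃ L : ℝ, 0 < L ∧ ∀ μ ν, P1 μ → P1 ν → ∀ x y,
      ‖v ν y - v μ x‖ ≤ L * (‖y - x‖ + W1 μ ν)) ∧
    (∀ μ ν, P1 μ → P1 ν → ∀ α : ℝ, 0 ≤ α → α ≤ 1 → ∀ x,
      v (ENNReal.ofReal α • μ + ENNReal.ofReal (1 - α) • ν) x
        = α • v μ x + (1 - α) • v ν x) :=
  isotropic_velocity_satisfies_assumptionA_general d vd Kd hvdlip Vd hvdbdd R N F LF hF χ Lχ hχlip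
    hχrange hχ0 Fmax hFmax v hv

end
end
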